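/- arXiv:1506.07793 — 12 statements merged into one kernel-verified Lean document; each statement's English description precedes it below -/
import Mathlib

section
/- Let t, A, B be complex numbers and R > 0 a real number. Then the counterclockwise circle integral over the circle {z ∈ ℂ : |z| = R} of the function z ↦ t·e^{iz}·((z−A)/z)·(1 + B/z) equals −2πi·t·(A − B + i·A·B). (Equivalently, with the circle oriented as the boundary of the exterior domain D(∞,R), the integral equals 2πi·t·(A − B + i·A·B), which is the value of ∮_{∂_R} g·dh for the Weierstrass data g(z) = t·e^{iz}(z−A)/z, dh = (1 + B/z)dz.) -/
/-!
On the circle the integrand equals `f z / z ^ 2` with `f z = t e^{iz} (z - A) (z + B)` entire,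
so Cauchy's formula for the derivative gives `2πi f'(0) = -2πi t (A - B + i A B)`.
-/

open Complex Metric Set

theorem Differentiable.circleIntegral_div_sub_sq {f : ℂ → ℂ} (hf : Differentiable ℂ f)
    {c w : ℂ} {R : ℝ} (hw : w ∈ ball c R) :
    (∮ z in C(c, R), f z / (z - w) ^ 2) = 2 * (Real.pi : ℂ) * I * _root_.deriv f w := by
  have hcauchy := two_pi_I_inv_smul_circleIntegral_sub_sq_inv_smul_of_differentiable isOpen_univ
    (subset_univ _) hf.differentiableOn hw
  have h2πI : (2 * Real.pi * I : ℂ) ≠ 0 := by simp [Real.pi_ne_zero, I_ne_zero]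
  simp only [smul_eq_mul] at hcauchy
  rw [← hcauchy, mul_inv_cancel_left₀ h2πI]
  exact circleIntegral.integral_congr (pos_of_mem_ball hw).le fun z _ => div_eq_inv_mul _ _

theorem hasDerivAt_mul_exp_I_mul_mul_sub_mul_add_zero (t A B : ℂ) :
    HasDerivAt (fun z : ℂ => t * exp (I * z) * ((z - A) * (z + B)))
      (-(t * (A - B + I * A * B))) 0 := by
  have hexp : HasDerivAt (fun z : ℂ => t * exp (I * z)) (t * I) 0 := by
    simpa using
      ((hasDerivAt_exp (I * 0)).comp 0 ((hasDerivAt_id (0 : ℂ)).const_mul I)).const_mul t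
  have hquad : HasDerivAt (fun z : ℂ => (z - A) * (z + B)) (B - A) 0 := by
    simpa [sub_eq_add_neg] using
      ((hasDerivAt_id (0 : ℂ)).sub_const A).fun_mul ((hasDerivAt_id (0 : ℂ)).add_const B)
  refine (hexp.fun_mul hquad).congr_deriv ?_
  simp only [mul_zero, Complex.exp_zero, mul_one, zero_sub, zero_add]
  ring

/-- The counterclockwise circle integral over `{|z| = R}` of
`z ↦ t·e^{iz}·((z−A)/z)·(1 + B/z)` equals `−2πi·t·(A − B + i·A·B)`. -/
theorem stmt0 (t A B : ℂ) (R : ℝ) (hR : 0 < R) :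
    (∮ z in C(0, R), t * Complex.exp (Complex.I * z) * ((z - A) / z) * (1 + B / z)) =
      -(2 * Real.pi * Complex.I) * t * (A - B + Complex.I * A * B) := by
  set f : ℂ → ℂ := fun z => t * exp (I * z) * ((z - A) * (z + B))
  have hintegrand : EqOn (fun z => t * exp (I * z) * ((z - A) / z) * (1 + B / z))
      (fun z => f z / (z - 0) ^ 2) (sphere 0 R) := by
    intro z hz
    have hz0 : z ≠ 0 := ne_of_mem_sphere hz hR.ne'
    simp only [f, sub_zero]
    field_simp
  have hf : Differentiable ℂ f := by fun_prop
  rw [circleIntegral.integral_congr hR.le hintegrand,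
    hf.circleIntegral_div_sub_sq (mem_ball_self hR),
    (hasDerivAt_mul_exp_I_mul_mul_sub_mul_add_zero t A B).deriv]
  ring
end

section
/- Let t be a nonzero complex number, A, B complex numbers, and R a real number with R > |A|. Then the counterclockwise circle integral over the circle {z ∈ ℂ : |z| = R} of the function z ↦ (1/t)·e^{−iz}·(z/(z−A))·(1 + B/z) equals 2πi·(A + B)·e^{−iA}/t. (With the circle oriented as the boundary of the exterior domain D(∞,R), the integral equals −2πi·(A+B)/(t·e^{iA}), which is the value of ∮_{∂_R} dh/g for the Weierstrass data g(z) = t·e^{iz}(z−A)/z, dh = (1 + B/z)dz.) -/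
open Complex

/-- The factor `1 + B / z` cancels the `z` in `z / (z - A)`, so the pole at `0` is removable and
only the simple pole at `A` contributes. -/
theorem circleIntegral_mul_div_sub_mul_one_add_div {g : ℂ → ℂ} (hg : Differentiable ℂ g)
    {A : ℂ} (B : ℂ) {R : ℝ} (hR : ‖A‖ < R) :
    (∮ z in C(0, R), g z * (z / (z - A)) * (1 + B / z)) =
      2 * Real.pi * I * ((A + B) * g A) := by
  have hR0 : 0 < R := (norm_nonneg A).trans_lt hR
  have hA : A ∈ Metric.ball (0 : ℂ) R := by simpa using hR
  have hf : Differentiable ℂ fun z => (z + B) * g z := by fun_prop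
  have hcauchy := hf.diffContOnCl.circleIntegral_sub_inv_smul hA
  rw [smul_eq_mul] at hcauchy
  rw [← hcauchy]
  refine circleIntegral.integral_congr hR0.le fun z hz => ?_
  have hz : ‖z‖ = R := by simpa using hz
  have hz0 : z ≠ 0 := by rintro rfl; simp [hR0.ne] at hz
  have hzA : z - A ≠ 0 := sub_ne_zero.mpr (by rintro rfl; exact hR.ne hz)
  rw [smul_eq_mul]
  field_simp

theorem stmt1_general (t : ℂ) (A B : ℂ) (R : ℝ) (hR : ‖A‖ < R) :
    (∮ z in C(0, R), (1 / t) * Complex.exp (-(Complex.I * z)) * (z / (z - A)) * (1 + B / z)) =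
      2 * Real.pi * Complex.I * (A + B) * Complex.exp (-(Complex.I * A)) / t := by
  have hg : Differentiable ℂ fun z => 1 / t * exp (-(I * z)) := by fun_prop
  rw [circleIntegral_mul_div_sub_mul_one_add_div hg B hR]
  ring

/-- For `t ≠ 0` and `R > |A|`, the counterclockwise circle integral over `{|z| = R}` of
`z ↦ (1/t)·e^{−iz}·(z/(z−A))·(1 + B/z)` equals `2πi·(A + B)·e^{−iA}/t`. -/
theorem stmt1 (t : ℂ) (ht : t ≠ 0) (A B : ℂ) (R : ℝ) (hR : ‖A‖ < R) :
    (∮ z in C(0, R), (1 / t) * Complex.exp (-(Complex.I * z)) * (z / (z - A)) * (1 + B / z)) =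
      2 * Real.pi * Complex.I * (A + B) * Complex.exp (-(Complex.I * A)) / t :=
  stmt1_general t A B R hR
end

section
/- Let t > 0 be real, B a real number, A a nonzero complex number, and R > |A| a real number. Set g(z) = t·e^{iz}(z−A)/z and consider the one-form dh = (1 + B/z)dz. Then the horizontal period condition, namely that the complex conjugate of the counterclockwise circle integral ∮_{|z|=R} g(z)(1 + B/z) dz equals the counterclockwise circle integral ∮_{|z|=R} (1/g(z))(1 + B/z) dz, holds if and only if t²·(A·(1 + iB) − B) = (conj(A) + B)·e^{i·conj(A)}. -/
/-!
Both periods are residue computations. On the circle, `g·dh = t·e^{iz}(z − A)(z + B)/z²`, so by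
Cauchy's formula for the first derivative its integral is `2πi` times the derivative of
`t·e^{iz}(z − A)(z + B)` at `0`, namely `−2πi·t·(A(1 + iB) − B)`. Likewise
`dh/g = (z + B)e^{−iz}/(t(z − A))` has a single simple pole at `A`, inside the circle, with
residue `(A + B)e^{−iA}/t`. Conjugating the resulting equation and cancelling `−2πi/t` leaves the
stated condition.
-/

open Complex Metric
open scoped Real

lemma circleIntegral_g_mul_dh (t B : ℝ) (A : ℂ) {R : ℝ} (hR : 0 < R) :
    (∮ z in C(0, R), (t : ℂ) * exp (I * z) * ((z - A) / z) * (1 + (B : ℂ) / z))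
      = -(2 * π * I) * t * (A * (1 + I * B) - B) := by
  have hderiv : HasDerivAt (fun z : ℂ => t * exp (I * z) * ((z - A) * (z + B)))
      (-(t * (A * (1 + I * B) - B))) 0 := by
    have := ((((hasDerivAt_id (0 : ℂ)).const_mul I).cexp).const_mul (t : ℂ)).mul
      (((hasDerivAt_id (0 : ℂ)).sub_const A).mul ((hasDerivAt_id (0 : ℂ)).add_const (B : ℂ)))
    exact this.congr_deriv (by
      simp only [id_eq, mul_zero, exp_zero, mul_one, one_mul, Pi.mul_apply, zero_sub, zero_add]
      ring)
  have hdiff : DiffContOnCl ℂ (fun z : ℂ => t * exp (I * z) * ((z - A) * (z + B))) (ball 0 R) :=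
    Differentiable.diffContOnCl (by fun_prop)
  calc (∮ z in C(0, R), (t : ℂ) * exp (I * z) * ((z - A) / z) * (1 + (B : ℂ) / z))
      = ∮ z in C(0, R), (1 / (z - 0) ^ 2) • (t * exp (I * z) * ((z - A) * (z + B))) := by
        refine circleIntegral.integral_congr hR.le fun z hz => ?_
        have hz : z ≠ 0 := ne_zero_of_mem_sphere hR.ne' ⟨z, hz⟩
        simp only [sub_zero, smul_eq_mul]
        field_simp
    _ = -(2 * π * I) * t * (A * (1 + I * B) - B) := by
        rw [hdiff.deriv_eq_smul_circleIntegral hR, hderiv.deriv, smul_eq_mul]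
        ring

lemma circleIntegral_dh_div_g (t B : ℝ) {A : ℂ} {R : ℝ} (hR : ‖A‖ < R) :
    (∮ z in C(0, R), (1 / ((t : ℂ) * exp (I * z) * ((z - A) / z))) * (1 + (B : ℂ) / z))
      = 2 * π * I * ((A + B) * exp (-(I * A)) / t) := by
  have hR0 : 0 < R := (norm_nonneg A).trans_lt hR
  have hdiff : DiffContOnCl ℂ (fun z : ℂ => (z + B) * exp (-(I * z)) / t) (ball 0 R) :=
    Differentiable.diffContOnCl (by fun_prop)
  calc (∮ z in C(0, R), (1 / ((t : ℂ) * exp (I * z) * ((z - A) / z))) * (1 + (B : ℂ) / z))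
      = ∮ z in C(0, R), (z - A)⁻¹ • ((z + B) * exp (-(I * z)) / t) := by
        refine circleIntegral.integral_congr hR0.le fun z hz => ?_
        have hz : z ≠ 0 := ne_zero_of_mem_sphere hR0.ne' ⟨z, hz⟩
        simp only [smul_eq_mul, exp_neg]
        field_simp
    _ = 2 * π * I * ((A + B) * exp (-(I * A)) / t) :=
        (hdiff.circleIntegral_sub_inv_smul (by simpa using hR)).trans (smul_eq_mul ..)

theorem stmt2_general (t : ℝ) (ht : 0 < t) (B : ℝ) (A : ℂ) (R : ℝ)
    (hR : ‖A‖ < R) :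
    ((starRingEnd ℂ)
        (∮ z in C(0, R), (t : ℂ) * Complex.exp (Complex.I * z) * ((z - A) / z) * (1 + (B : ℂ) / z))
      = ∮ z in C(0, R),
          (1 / ((t : ℂ) * Complex.exp (Complex.I * z) * ((z - A) / z))) * (1 + (B : ℂ) / z))
    ↔ (t : ℂ) ^ 2 * (A * (1 + Complex.I * (B : ℂ)) - (B : ℂ))
        = ((starRingEnd ℂ) A + (B : ℂ)) * Complex.exp (Complex.I * (starRingEnd ℂ) A) := by
  have ht0 : (t : ℂ) ≠ 0 := ofReal_ne_zero.mpr ht.ne'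
  have hconj : starRingEnd ℂ (2 * π * I * ((A + B) * exp (-(I * A)) / t))
      = -(2 * π * I) * ((starRingEnd ℂ A + B) * exp (I * starRingEnd ℂ A) / t) := by
    simp only [map_mul, map_div₀, map_add, map_neg, map_ofNat, conj_ofReal, conj_I, ← exp_conj,
      neg_mul, neg_neg]
    ring
  rw [circleIntegral_g_mul_dh t B A ((norm_nonneg A).trans_lt hR), circleIntegral_dh_div_g t B hR,
    ← (starRingEnd ℂ).injective.eq_iff, conj_conj, hconj, mul_assoc,
    mul_right_inj' (neg_ne_zero.mpr two_pi_I_ne_zero), eq_div_iff ht0]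
  constructor <;> intro h <;> linear_combination h

/-- For `g(z) = t·e^{iz}(z−A)/z` (with `t > 0` real, `A ≠ 0`) and `dh = (1 + B/z)dz`
(with `B` real), the horizontal period condition `conj(∮ g·dh) = ∮ dh/g` along the
circle `{|z| = R}`, `R > |A|`, holds if and only if
`t²·(A·(1 + iB) − B) = (conj(A) + B)·e^{i·conj(A)}`. -/
theorem stmt2 (t : ℝ) (ht : 0 < t) (B : ℝ) (A : ℂ) (hA : A ≠ 0) (R : ℝ)
    (hR : ‖A‖ < R) :
    ((starRingEnd ℂ)
        (∮ z in C(0, R), (t : ℂ) * Complex.exp (Complex.I * z) * ((z - A) / z) * (1 + (B : ℂ) / z))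
      = ∮ z in C(0, R),
          (1 / ((t : ℂ) * Complex.exp (Complex.I * z) * ((z - A) / z))) * (1 + (B : ℂ) / z))
    ↔ (t : ℂ) ^ 2 * (A * (1 + Complex.I * (B : ℂ)) - (B : ℂ))
        = ((starRingEnd ℂ) A + (B : ℂ)) * Complex.exp (Complex.I * (starRingEnd ℂ) A) :=
  stmt2_general t ht B A R hR
end

section
/- For every real B ≥ 0 there exists a real x₀ > B/(1+B²) such that for every y ∈ ℝ and every x > x₀ the following strict inequality holds: Im(conj(L(x))·(1 + iB)) / |L(x)|² < 1 + y/((x+B)² + y²), where L(x) = (x − B·y − B) + i·(B·x + y). (The left-hand side is the derivative θ_L'(x) of a continuous argument of the curve x ↦ L(x), and the right-hand side is the derivative θ_R'(x) of θ_R(x) = x − arctan(y/(x+B)), a continuous argument of the curve x ↦ ((x+B) − iy)e^{ix}.) -/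
/-!
Writing `w = 1 + iB`, the curve is `L(x) = w · z` with `z = (x - B/(1+B²)) + i(y + B²/(1+B²))`,
so `θ_L'(x) = -Im z / |z|²`. Since `a² + b² ≥ 2|a||b|`, this is at most `1/(2 Re z)`, and likewise
`θ_R'(x) ≥ 1 - 1/(2(x+B))`. Once `Re z > 1` both error terms are below `1/2`.
-/

open Complex

theorem im_conj_mul_mul_div_sq_norm (w z : ℂ) (hw : w ≠ 0) :
    ((starRingEnd ℂ) (w * z) * w).im / ‖w * z‖ ^ 2 = -z.im / ‖z‖ ^ 2 := by
  have hconj : (starRingEnd ℂ) (w * z) * w = ((‖w‖ ^ 2 : ℝ) : ℂ) * (starRingEnd ℂ) z := by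
    rw [map_mul, mul_comm, ← mul_assoc, mul_conj']
    push_cast
    ring
  have hw' : ‖w‖ ^ 2 ≠ 0 := by positivity
  rw [hconj, im_ofReal_mul, conj_im, norm_mul, mul_pow, mul_div_mul_left _ _ hw']

theorem abs_div_sq_add_sq_le (a b : ℝ) (ha : 0 < a) : |b| / (a ^ 2 + b ^ 2) ≤ 1 / (2 * a) := by
  rw [div_le_div_iff₀ (by positivity) (by positivity)]
  nlinarith [sq_nonneg (a - |b|), sq_abs b]

/-- Assertion 6.1: for every `B ≥ 0` there exists `x₀ > B/(1+B²)` such that for all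
`y ∈ ℝ` and all `x > x₀`, the derivative of a continuous argument of
`L(x) = (x − By − B) + i(Bx + y)`, namely `Im(conj(L(x))·(1 + iB))/|L(x)|²`, is
strictly smaller than `1 + y/((x+B)² + y²)`, the derivative of a continuous argument of
`R(x) = ((x+B) − iy)e^{ix}`. -/
theorem stmt4 (B : ℝ) (hB : 0 ≤ B) :
    ∃ x₀ : ℝ, B / (1 + B ^ 2) < x₀ ∧ ∀ y x : ℝ, x₀ < x →
      ((starRingEnd ℂ) (((x - B * y - B : ℝ) : ℂ) + Complex.I * ((B * x + y : ℝ) : ℂ)) *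
          (1 + Complex.I * (B : ℂ))).im /
        ‖((x - B * y - B : ℝ) : ℂ) + Complex.I * ((B * x + y : ℝ) : ℂ)‖ ^ 2
      < 1 + y / ((x + B) ^ 2 + y ^ 2) := by
  have hc : 0 < 1 + B ^ 2 := by positivity
  refine ⟨B / (1 + B ^ 2) + 1, by linarith, fun y x hx => ?_⟩
  set s := x - B / (1 + B ^ 2)
  set u := y + B ^ 2 / (1 + B ^ 2)
  have hs : 1 < s := by linarith
  have hsxB : s ≤ x + B := by linarith [div_nonneg hB hc.le]
  have hL : ((x - B * y - B : ℝ) : ℂ) + I * ((B * x + y : ℝ) : ℂ) = (1 + I * B) * ⟨s, u⟩ := by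
    apply Complex.ext <;> simp [s, u] <;> field_simp <;> ring
  have hw : 1 + I * B ≠ 0 := fun h => by simpa using congrArg re h
  rw [hL, im_conj_mul_mul_div_sq_norm _ _ hw, Complex.sq_norm, normSq_mk, ← sq, ← sq]
  calc -u / (s ^ 2 + u ^ 2)
      ≤ |u| / (s ^ 2 + u ^ 2) := by gcongr; exact neg_le_abs u
    _ ≤ 1 / (2 * s) := abs_div_sq_add_sq_le s u (by linarith)
    _ < 1 - 1 / (2 * s) := by
      rw [mul_comm, ← div_div]
      linarith [(div_lt_one (by linarith : (0 : ℝ) < s)).2 hs]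
    _ ≤ 1 - 1 / (2 * (x + B)) := by gcongr
    _ ≤ 1 - |y| / ((x + B) ^ 2 + y ^ 2) :=
      sub_le_sub_left (abs_div_sq_add_sq_le (x + B) y (by linarith)) 1
    _ ≤ 1 + y / ((x + B) ^ 2 + y ^ 2) := by
      rw [sub_eq_add_neg, ← neg_div]
      gcongr
      exact neg_abs_le y
end

section
/- For every real B ≥ 0 and every real y, there exist a real number x > B/(1+B²) and a real number s > 0 such that ((x + B) − i·y)·e^{ix} = s·((x − B·y − B) + i·(B·x + y)). -/
/-!
Put `w(x) = ((x + B) - iy) · conj L(x)`, so that `R(x) · conj L(x) = w(x) e^{ix}`; then `R(x)` is a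
positive multiple of `L(x)` exactly when `w(x) e^{ix}` is a positive real. The real part of `w(x)`
is a monic quadratic in `x`, hence positive far to the right. On a window
`[2πk - π/2, 2πk + π/2]` there, `Im (w e^{ix})` runs from `-Re w < 0` to `Re w > 0`, so it vanishes
somewhere inside; since `cos x > 0` at that point, `w e^{ix}` is a positive rather than a negative
real.
-/

open Complex ComplexConjugate Set

lemma exists_pos_mul_of_mul_conj {z w : ℂ} (hre : 0 < (z * conj w).re)
    (him : (z * conj w).im = 0) : ∃ s : ℝ, 0 < s ∧ z = s * w := by
  have hw : w ≠ 0 := by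
    rintro rfl
    simp at hre
  set r := (z * conj w).re
  have hreal : z * conj w = r := Complex.ext (by simp [r]) (by simp [him])
  have hnormSq : (normSq w : ℂ) ≠ 0 := by exact_mod_cast (normSq_pos.mpr hw).ne'
  refine ⟨r / normSq w, div_pos hre (normSq_pos.mpr hw), ?_⟩
  calc z = z * conj w * w / normSq w := by
        rw [mul_assoc, mul_comm (conj w), mul_conj, mul_div_cancel_right₀ _ hnormSq]
    _ = _ := by rw [hreal]; push_cast; ring

lemma re_mul_exp_pos_of_im_eq_zero {w : ℂ} {x : ℝ} (hw : 0 < w.re) (hx : 0 < Real.cos x)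
    (him : (w * exp (x * I)).im = 0) : 0 < (w * exp (x * I)).re := by
  simp only [mul_re, mul_im, exp_ofReal_mul_I_re, exp_ofReal_mul_I_im] at him ⊢
  have hcos : Real.cos x * (w.re * Real.cos x - w.im * Real.sin x) = w.re := by
    linear_combination w.re * Real.sin_sq_add_cos_sq x - Real.sin x * him
  exact pos_of_mul_pos_right (by rwa [hcos]) hx.le

lemma exists_mul_exp_pos_of_re_pos {w : ℝ → ℂ} (hw : Continuous w) (k : ℤ)
    (hpos : ∀ x ∈ Icc (k * (2 * Real.pi) - Real.pi / 2) (k * (2 * Real.pi) + Real.pi / 2),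
      0 < (w x).re) :
    ∃ x ∈ Icc (k * (2 * Real.pi) - Real.pi / 2) (k * (2 * Real.pi) + Real.pi / 2),
      0 < (w x * exp (x * I)).re ∧ (w x * exp (x * I)).im = 0 := by
  set a := k * (2 * Real.pi)
  have hab : a - Real.pi / 2 ≤ a + Real.pi / 2 := by linarith [Real.pi_pos]
  have him : ∀ x, (w x * exp (x * I)).im = (w x).re * Real.sin x + (w x).im * Real.cos x := by
    intro x
    simp only [mul_im, exp_ofReal_mul_I_re, exp_ofReal_mul_I_im]
  have hleft : (w (a - Real.pi / 2) * exp ((a - Real.pi / 2 : ℝ) * I)).im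
      = -(w (a - Real.pi / 2)).re := by
    rw [him, show a - Real.pi / 2 = -(Real.pi / 2) + k * (2 * Real.pi) by ring,
      Real.sin_add_int_mul_two_pi, Real.cos_add_int_mul_two_pi,
      Real.sin_neg, Real.cos_neg, Real.sin_pi_div_two, Real.cos_pi_div_two]
    ring
  have hright : (w (a + Real.pi / 2) * exp ((a + Real.pi / 2 : ℝ) * I)).im
      = (w (a + Real.pi / 2)).re := by
    rw [him, show a + Real.pi / 2 = Real.pi / 2 + k * (2 * Real.pi) by ring,
      Real.sin_add_int_mul_two_pi, Real.cos_add_int_mul_two_pi,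
      Real.sin_pi_div_two, Real.cos_pi_div_two]
    ring
  have hcont : Continuous fun x : ℝ => (w x * exp (x * I)).im := by fun_prop
  obtain ⟨x, hx, hzero⟩ := intermediate_value_Ioo hab hcont.continuousOn
    (show (0 : ℝ) ∈ Ioo _ _ by
      rw [hleft, hright]
      exact ⟨neg_neg_of_pos (hpos _ ⟨le_rfl, hab⟩), hpos _ ⟨hab, le_rfl⟩⟩)
  have hcos : 0 < Real.cos x := by
    rw [← Real.cos_sub_int_mul_two_pi x k]
    exact Real.cos_pos_of_mem_Ioo ⟨by linarith [hx.1], by linarith [hx.2]⟩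
  exact ⟨x, Ioo_subset_Icc_self hx,
    re_mul_exp_pos_of_im_eq_zero (hpos x (Ioo_subset_Icc_self hx)) hcos hzero, hzero⟩

lemma sq_sub_mul_sub_pos {b c x : ℝ} (hx : |b| + |c| + 1 ≤ x) : 0 < x ^ 2 - b * x - c := by
  have hx1 : 1 ≤ x := by linarith [abs_nonneg b, abs_nonneg c]
  nlinarith [mul_le_mul_of_nonneg_right hx (by linarith : (0 : ℝ) ≤ x),
    mul_nonneg (sub_nonneg.mpr (le_abs_self b)) (by linarith : (0 : ℝ) ≤ x),
    mul_nonneg (abs_nonneg c) (sub_nonneg.mpr hx1), le_abs_self c]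

lemma div_one_add_sq_lt_one (B : ℝ) : B / (1 + B ^ 2) < 1 := by
  rw [div_lt_one (by positivity)]
  nlinarith [sq_nonneg (B - 1)]

theorem stmt5_general (B : ℝ) (y : ℝ) :
    ∃ x : ℝ, B / (1 + B ^ 2) < x ∧ ∃ s : ℝ, 0 < s ∧
      (((x + B : ℝ) : ℂ) - Complex.I * (y : ℂ)) * Complex.exp (Complex.I * (x : ℂ))
        = (s : ℂ) * (((x - B * y - B : ℝ) : ℂ) + Complex.I * ((B * x + y : ℝ) : ℂ)) := by
  set L : ℝ → ℂ := fun x => ((x - B * y - B : ℝ) : ℂ) + I * ((B * x + y : ℝ) : ℂ)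
  set w : ℝ → ℂ := fun x => (((x + B : ℝ) : ℂ) - I * y) * conj (L x)
  set M := |2 * B * y| + |B ^ 2 * y + B ^ 2 + y ^ 2| + 1
  have hw_re : ∀ x, M ≤ x → 0 < (w x).re := by
    intro x hx
    have hre : (w x).re = x ^ 2 - 2 * B * y * x - (B ^ 2 * y + B ^ 2 + y ^ 2) := by
      simp only [w, L, mul_re, mul_im, conj_re, conj_im, add_re, add_im, sub_re, sub_im, ofReal_re,
        ofReal_im, I_re, I_im]
      ring
    exact hre ▸ sq_sub_mul_sub_pos hx
  obtain ⟨k, hk⟩ := exists_int_gt ((M + Real.pi / 2) / (2 * Real.pi))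
  have hMk : M ≤ k * (2 * Real.pi) - Real.pi / 2 := by
    rw [div_lt_iff₀ (by positivity)] at hk
    linarith
  obtain ⟨x, hx, hre, him⟩ := exists_mul_exp_pos_of_re_pos (by fun_prop) k
    (fun x hx => hw_re x (hMk.trans hx.1))
  have hR : (((x + B : ℝ) : ℂ) - I * y) * exp (I * x) * conj (L x) = w x * exp (x * I) := by
    rw [mul_comm I (x : ℂ)]
    ring
  obtain ⟨s, hs, hRL⟩ := exists_pos_mul_of_mul_conj (hR ▸ hre) (hR ▸ him)
  have hMx : 1 ≤ x := by
    linarith [hx.1, abs_nonneg (2 * B * y), abs_nonneg (B ^ 2 * y + B ^ 2 + y ^ 2)]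
  exact ⟨x, (div_one_add_sq_lt_one B).trans_le hMx, s, hs, hRL⟩

/-- Assertion 6.2 (existence part): for every `B ≥ 0` and `y ∈ ℝ` there exist
`x > B/(1+B²)` and `s > 0` with `((x+B) − iy)e^{ix} = s·((x − By − B) + i(Bx + y))`. -/
theorem stmt5 (B : ℝ) (hB : 0 ≤ B) (y : ℝ) :
    ∃ x : ℝ, B / (1 + B ^ 2) < x ∧ ∃ s : ℝ, 0 < s ∧
      (((x + B : ℝ) : ℂ) - Complex.I * (y : ℂ)) * Complex.exp (Complex.I * (x : ℂ))
        = (s : ℂ) * (((x - B * y - B : ℝ) : ℂ) + Complex.I * ((B * x + y : ℝ) : ℂ)) :=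
  stmt5_general B y
end

section
/- For every real B ≥ 0 and every real a > 0 there exist a real t > 0 and a complex number A such that t²·(A·(1 + i·B) − B) = (conj(A) + B)·e^{i·conj(A)} and 2π·t·|A·(1 + i·B) − B| = a. -/
/-!
Write `ζ = conj A` and `v ζ = (1 - iB)ζ - B`. Then `A(1 + iB) - B = conj (v ζ)`, so after
multiplication by `v ζ` the period equation reads `t²‖v ζ‖² = e^{iζ}(ζ + B) v ζ`, and the flux
length is `2πt‖v ζ‖`. Hence it suffices to solve `e^{iζ}(ζ + B) v ζ = c` for `c = (a / 2π)² > 0`.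
Taking logarithms, a solution is a fixed point of `ζ ↦ K + i(log (ζ + B) + log (v ζ))` with
`K = 2πn - i log c`. On the disc of radius `ρ ≍ n` around `K` both factors have real part `≍ n`,
so the map moves points by `O(log n) ≤ ρ` and has derivative of norm `≤ 1/2`: it is a contraction
of the disc for `n` large.
-/

open Complex Filter Asymptotics Metric

theorem exists_fixedPoint_of_nnnorm_deriv_le {𝕜 : Type*} [RCLike 𝕜] {g g' : 𝕜 → 𝕜} {s : Set 𝕜}
    {k : NNReal} (hs : Convex ℝ s) (hsc : IsClosed s) (hne : s.Nonempty) (hk : k < 1)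
    (hgs : Set.MapsTo g s s) (hg : ∀ x ∈ s, HasDerivWithinAt g (g' x) s x)
    (hg' : ∀ x ∈ s, ‖g' x‖₊ ≤ k) : ∃ x ∈ s, g x = x := by
  obtain ⟨x₀, hx₀⟩ := hne
  obtain ⟨x, hx, hfix, -⟩ := ContractingWith.exists_fixedPoint' hsc.isComplete hgs
    ⟨hk, (hs.lipschitzOnWith_of_nnnorm_hasDerivWithin_le hg hg').mapsToRestrict hgs⟩ hx₀
    (edist_ne_top _ _)
  exact ⟨x, hx, hfix⟩

theorem eventually_add_log_le {a ε : ℝ} (ha : 0 < a) (hε : 0 < ε) (b C : ℝ) :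
    ∀ᶠ x in atTop, C + Real.log (a * x + b) ≤ ε * x := by
  have hlin : Tendsto (fun x => a * x + b) atTop atTop :=
    tendsto_atTop_add_const_right _ b (tendsto_id.const_mul_atTop ha)
  have hO : (fun x => a * x + b) =O[atTop] id :=
    ((isBigO_refl id atTop).const_mul_left a).add (isLittleO_const_id_atTop b).isBigO
  have ho : (fun x => C + Real.log (a * x + b)) =o[atTop] id :=
    (isLittleO_const_id_atTop C).add
      ((Real.isLittleO_log_id_atTop.comp_tendsto hlin).trans_isBigO hO)
  filter_upwards [ho.bound hε, eventually_ge_atTop 0] with x hx hx₀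
  simpa [Real.norm_eq_abs, abs_of_nonneg hx₀] using (le_abs_self _).trans hx

theorem Complex.norm_log_le_log_add_pi {z : ℂ} {M : ℝ} (h₁ : 1 ≤ ‖z‖) (hM : ‖z‖ ≤ M) :
    ‖log z‖ ≤ Real.log M + Real.pi := by
  calc ‖log z‖ ≤ |(log z).re| + |(log z).im| := norm_le_abs_re_add_abs_im _
    _ = Real.log ‖z‖ + |arg z| := by rw [log_re, log_im, abs_of_nonneg (Real.log_nonneg h₁)]
    _ ≤ Real.log M + Real.pi := add_le_add (Real.log_le_log (by linarith) hM) (abs_arg_le_pi z)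

theorem Complex.le_re_mul_add_of_mem_closedBall {α β K ζ : ℂ} {ρ : ℝ}
    (hζ : ζ ∈ closedBall K ρ) : (α * K + β).re - ‖α‖ * ρ ≤ (α * ζ + β).re := by
  have hre : (α * ζ + β).re = (α * K + β).re + (α * (ζ - K)).re := by rw [← add_re]; ring_nf
  have hnorm : ‖α * (ζ - K)‖ ≤ ‖α‖ * ρ := by
    rw [norm_mul]; exact mul_le_mul_of_nonneg_left (mem_closedBall_iff_norm.mp hζ) (norm_nonneg _)
  linarith [neg_abs_le (α * (ζ - K)).re, abs_re_le_norm (α * (ζ - K))]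

theorem Complex.norm_mul_add_le_of_mem_closedBall {α β K ζ : ℂ} {ρ : ℝ}
    (hζ : ζ ∈ closedBall K ρ) : ‖α * ζ + β‖ ≤ ‖α‖ * (‖K‖ + ρ) + ‖β‖ := by
  have hζK : ‖ζ‖ ≤ ‖K‖ + ρ :=
    (norm_le_norm_add_norm_sub' ζ K).trans (by gcongr; exact mem_closedBall_iff_norm.mp hζ)
  calc ‖α * ζ + β‖ ≤ ‖α‖ * ‖ζ‖ + ‖β‖ := (norm_add_le _ _).trans_eq (by rw [norm_mul])
    _ ≤ ‖α‖ * (‖K‖ + ρ) + ‖β‖ := by gcongr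

theorem Complex.hasDerivAt_log_mul_add {α β ζ : ℂ} (h : α * ζ + β ∈ slitPlane) :
    HasDerivAt (fun z => log (α * z + β)) (α / (α * ζ + β)) ζ := by
  simpa using (((hasDerivAt_id ζ).const_mul α).add_const β).clog h

theorem Complex.log_mul_add_bounds_of_mem_closedBall {α β K ζ : ℂ} {ρ M : ℝ}
    (hre : 4 * (1 + ‖α‖) + ‖α‖ * ρ ≤ (α * K + β).re) (hM : ‖α‖ * (‖K‖ + ρ) + ‖β‖ ≤ M)
    (hζ : ζ ∈ closedBall K ρ) :
    α * ζ + β ∈ slitPlane ∧ ‖log (α * ζ + β)‖ ≤ Real.log M + Real.pi ∧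
      ‖α / (α * ζ + β)‖ ≤ 4⁻¹ := by
  have hw : 4 * (1 + ‖α‖) ≤ (α * ζ + β).re := by
    linarith [le_re_mul_add_of_mem_closedBall (α := α) (β := β) hζ]
  have hwn : 4 * (1 + ‖α‖) ≤ ‖α * ζ + β‖ := hw.trans (re_le_norm _)
  have hα := norm_nonneg α
  refine ⟨mem_slitPlane_iff.mpr (Or.inl (by linarith)),
    norm_log_le_log_add_pi (by linarith) ((norm_mul_add_le_of_mem_closedBall hζ).trans hM), ?_⟩
  rw [norm_div, div_le_iff₀ (by linarith)]
  linarith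

theorem Complex.exists_exp_I_mul_mul_eq_exp_I_mul {α₁ β₁ α₂ β₂ K : ℂ} {ρ M : ℝ} (hρ₀ : 0 ≤ ρ)
    (hre₁ : 4 * (1 + ‖α₁‖) + ‖α₁‖ * ρ ≤ (α₁ * K + β₁).re)
    (hre₂ : 4 * (1 + ‖α₂‖) + ‖α₂‖ * ρ ≤ (α₂ * K + β₂).re)
    (hM₁ : ‖α₁‖ * (‖K‖ + ρ) + ‖β₁‖ ≤ M) (hM₂ : ‖α₂‖ * (‖K‖ + ρ) + ‖β₂‖ ≤ M)
    (hρ : 2 * (Real.log M + Real.pi) ≤ ρ) :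
    ∃ ζ, exp (I * ζ) * ((α₁ * ζ + β₁) * (α₂ * ζ + β₂)) = exp (I * K) := by
  have h₁ := fun ζ (hζ : ζ ∈ closedBall K ρ) => log_mul_add_bounds_of_mem_closedBall hre₁ hM₁ hζ
  have h₂ := fun ζ (hζ : ζ ∈ closedBall K ρ) => log_mul_add_bounds_of_mem_closedBall hre₂ hM₂ hζ
  obtain ⟨ζ, hζ, hfix⟩ := exists_fixedPoint_of_nnnorm_deriv_le (k := 2⁻¹)
    (g := fun ζ => K + I * (log (α₁ * ζ + β₁) + log (α₂ * ζ + β₂)))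
    (g' := fun ζ => I * (α₁ / (α₁ * ζ + β₁) + α₂ / (α₂ * ζ + β₂)))
    (convex_closedBall K ρ) isClosed_closedBall ⟨K, mem_closedBall_self hρ₀⟩ (by norm_num)
    (fun ζ hζ => by
      rw [mem_closedBall_iff_norm, add_sub_cancel_left, norm_mul, norm_I, one_mul]
      linarith [norm_add_le (log (α₁ * ζ + β₁)) (log (α₂ * ζ + β₂)), (h₁ ζ hζ).2.1, (h₂ ζ hζ).2.1])
    (fun ζ hζ => ((((hasDerivAt_log_mul_add (h₁ ζ hζ).1).add
      (hasDerivAt_log_mul_add (h₂ ζ hζ).1)).const_mul I).const_add K).hasDerivWithinAt)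
    (fun ζ hζ => by
      rw [← NNReal.coe_le_coe, coe_nnnorm, norm_mul, norm_I, one_mul, NNReal.coe_inv,
        NNReal.coe_ofNat]
      linarith [norm_add_le (α₁ / (α₁ * ζ + β₁)) (α₂ / (α₂ * ζ + β₂)), (h₁ ζ hζ).2.2,
        (h₂ ζ hζ).2.2])
  have hIζ : I * ζ = I * K - (log (α₁ * ζ + β₁) + log (α₂ * ζ + β₂)) := by
    conv_lhs => rw [← hfix]
    linear_combination (log (α₁ * ζ + β₁) + log (α₂ * ζ + β₂)) * I_sq
  have hu := slitPlane_ne_zero (h₁ ζ hζ).1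
  have hv := slitPlane_ne_zero (h₂ ζ hζ).1
  refine ⟨ζ, ?_⟩
  rw [hIζ, exp_sub, exp_add, exp_log hu, exp_log hv]
  exact div_mul_cancel₀ _ (mul_ne_zero hu hv)

theorem Complex.exp_I_mul_sub_log_mul_I {c : ℝ} (hc : 0 < c) (n : ℕ) :
    exp (I * ((2 * Real.pi * n : ℝ) - Real.log c * I)) = c := by
  have h : I * ((2 * Real.pi * n : ℝ) - Real.log c * I) = Real.log c + n * (2 * Real.pi * I) := by
    push_cast
    linear_combination (-(Real.log c : ℂ)) * I_sq
  rw [h, exp_add, ← ofReal_exp, Real.exp_log hc, exp_nat_mul_two_pi_mul_I, mul_one]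

theorem Complex.exists_exp_I_mul_mul_eq {B c : ℝ} (hB : 0 ≤ B) (hc : 0 < c) :
    ∃ ζ : ℂ, exp (I * ζ) * ((ζ + B) * ((1 - I * B) * ζ - B)) = c := by
  set L := |Real.log c|
  have hB₁ : 0 < 1 + B := by linarith
  have hP : ∀ᶠ P in atTop, 0 < P ∧ 2 * (4 * (2 + B) + B * L + B) ≤ P ∧
      Real.pi + Real.log (2 * (1 + B) * P + (1 + B) * (L + 1)) ≤ (4 * (1 + B))⁻¹ * P :=
    (eventually_gt_atTop 0).and ((eventually_ge_atTop _).and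
      (eventually_add_log_le (by positivity) (by positivity) _ _))
  obtain ⟨n, hP₀, hlin, hlog⟩ := ((tendsto_natCast_atTop_atTop.const_mul_atTop
    (by positivity : 0 < 2 * Real.pi)).eventually hP).exists
  set P := 2 * Real.pi * n
  -- `(1 + B)ρ = P / 2` keeps the real parts of both factors `≥ P / 2 - O(1)` on the disc, and
  -- the `M` below bounds both factors there.
  set ρ := P / (2 * (1 + B))
  have hρ₀ : 0 ≤ ρ := by positivity
  have hρB : (1 + B) * ρ = P / 2 := by simp only [ρ]; field_simp
  have hρ : ρ = 2 * ((4 * (1 + B))⁻¹ * P) := by simp only [ρ]; field_simp; ring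
  set K : ℂ := P - Real.log c * I
  have hK : ‖K‖ ≤ P + L := (norm_le_abs_re_add_abs_im _).trans_eq (by simp [K, abs_of_pos hP₀, L])
  have hK₁ : (1 * K + B).re = P + B := by simp [K]
  have hK₂ : ((1 - I * B) * K + -B).re = P - B * Real.log c - B := by simp [K, sub_eq_add_neg]
  have hα : ‖1 - I * B‖ ≤ 1 + B := (norm_sub_le _ _).trans_eq (by simp [abs_of_nonneg hB])
  have hB' : ‖(B : ℂ)‖ = B := by simp [abs_of_nonneg hB]
  have hBL : 0 ≤ B * L := mul_nonneg hB (abs_nonneg _)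
  have hBρ : 0 ≤ B * ρ := mul_nonneg hB hρ₀
  have hBP : 0 ≤ B * P := mul_nonneg hB hP₀.le
  obtain ⟨ζ, hζ⟩ := exists_exp_I_mul_mul_eq_exp_I_mul (α₁ := 1) (β₁ := B) (α₂ := 1 - I * B)
    (β₂ := -B) (M := 2 * (1 + B) * P + (1 + B) * (L + 1)) hρ₀
    (by rw [norm_one, hK₁]; linarith)
    (by rw [hK₂]; linarith [mul_le_mul_of_nonneg_right hα hρ₀,
      mul_le_mul_of_nonneg_left (le_abs_self (Real.log c)) hB])
    (by rw [norm_one, hB']; linarith)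
    (by rw [norm_neg, hB']; linarith [mul_le_mul hα (add_le_add_left hK ρ) (by positivity) hB₁.le])
    (by linarith)
  refine ⟨ζ, ?_⟩
  rw [exp_I_mul_sub_log_mul_I hc] at hζ
  simpa [sub_eq_add_neg] using hζ

/-- Assertion 6.4: for every `B ≥ 0` and every `a > 0` there exist `t > 0` and `A ∈ ℂ`
solving the period equation `t²(A(1+iB) − B) = (conj(A)+B)e^{i·conj(A)}` and realizing
horizontal flux length `2πt|A(1+iB) − B| = a`. -/
theorem stmt6 (B : ℝ) (hB : 0 ≤ B) (a : ℝ) (ha : 0 < a) :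
    ∃ (t : ℝ) (A : ℂ), 0 < t ∧
      (t : ℂ) ^ 2 * (A * (1 + Complex.I * (B : ℂ)) - (B : ℂ))
        = ((starRingEnd ℂ) A + (B : ℂ)) * Complex.exp (Complex.I * (starRingEnd ℂ) A) ∧
      2 * Real.pi * t * ‖A * (1 + Complex.I * (B : ℂ)) - (B : ℂ)‖ = a := by
  set s := a / (2 * Real.pi)
  have hs : 0 < s := by positivity
  obtain ⟨ζ, hζ⟩ := exists_exp_I_mul_mul_eq hB (pow_pos hs 2)
  set v := (1 - I * B) * ζ - B
  have hv : v ≠ 0 := by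
    rintro hv
    rw [hv, mul_zero, mul_zero] at hζ
    exact (pow_pos hs 2).ne' (by exact_mod_cast hζ.symm)
  have hconj : starRingEnd ℂ ζ * (1 + I * B) - B = starRingEnd ℂ v := by
    simp only [v, map_sub, map_mul, map_one, conj_I, conj_ofReal]
    ring
  have ht : ((s / ‖v‖ : ℝ) : ℂ) ^ 2 * (‖v‖ : ℂ) ^ 2 = (s ^ 2 : ℝ) := by
    have : (‖v‖ : ℂ) ≠ 0 := by exact_mod_cast norm_ne_zero_iff.mpr hv
    push_cast
    field_simp
  refine ⟨s / ‖v‖, starRingEnd ℂ ζ, by positivity, ?_, ?_⟩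
  · rw [hconj, conj_conj]
    apply mul_right_cancel₀ hv
    rw [mul_assoc, conj_mul', ht, ← hζ]
    ring
  · rw [hconj, norm_conj, mul_assoc, div_mul_cancel₀ _ (norm_ne_zero_iff.mpr hv)]
    exact mul_div_cancel₀ a (by positivity)
end

section
/- Let A be a complex number with Im(A) ≠ 0, let B be a complex number, and let R > |A| be a real number. Then the counterclockwise circle integral over the circle {z ∈ ℂ : |z| = R} of the function z ↦ e^{iz}·((z − A)/(z − conj(A)))·(1 + B/z) equals 2πi·[e^{i·conj(A)}·(conj(A) − A + B − A·B/conj(A)) + A·B/conj(A)]. (With the circle oriented as the boundary of the exterior domain D(∞,R), the integral equals −2πi times the bracket; this is the value of ∮_{∂_R} g·dh for the Case 2 Weierstrass data g(z) = e^{iz}(z−A)/(z−conj(A)), dh = (1 + B/z)dz.) -/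
open Complex Metric Set

/- After clearing denominators the integrand is `g z / (z (z - conj A))` with
`g z = e^{iz} (z - A) (z + B)` entire. Splitting `1 / ((z - a)(z - b))` into partial fractions
reduces the integral to two Cauchy integral formulas, giving `2πi (g (conj A) - g 0) / conj A`. -/

section TwoPointCauchy

variable {E : Type*} [NormedAddCommGroup E] [NormedSpace ℂ E] {c a b : ℂ} {R : ℝ} {g : ℂ → E}

theorem sub_ne_zero_of_mem_sphere_of_mem_ball {z : ℂ} (hz : z ∈ sphere c R) (ha : a ∈ ball c R) :
    z - a ≠ 0 :=
  sub_ne_zero.2 <| ne_of_mem_of_not_mem hz fun h ↦ (mem_sphere.1 h).not_lt (mem_ball.1 ha)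

theorem ContinuousOn.circleIntegrable_sub_inv_smul (hg : ContinuousOn g (sphere c R))
    (ha : a ∈ ball c R) : CircleIntegrable (fun z ↦ (z - a)⁻¹ • g z) c R := by
  refine ContinuousOn.circleIntegrable (pos_of_mem_ball ha).le (ContinuousOn.smul ?_ hg)
  exact (continuousOn_id.sub continuousOn_const).inv₀ fun z hz ↦
    sub_ne_zero_of_mem_sphere_of_mem_ball hz ha

theorem DifferentiableOn.circleIntegral_sub_mul_sub_inv_smul [CompleteSpace E]
    (hg : DifferentiableOn ℂ g (closedBall c R)) (ha : a ∈ ball c R) (hb : b ∈ ball c R)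
    (hab : a ≠ b) :
    (∮ z in C(c, R), ((z - a) * (z - b))⁻¹ • g z) =
      (2 * Real.pi * I / (a - b) : ℂ) • (g a - g b) := by
  have hsphere := hg.continuousOn.mono sphere_subset_closedBall
  have partial_fractions : EqOn (fun z ↦ ((z - a) * (z - b))⁻¹ • g z)
      (fun z ↦ (a - b)⁻¹ • ((z - a)⁻¹ • g z - (z - b)⁻¹ • g z)) (sphere c R) := by
    intro z hz
    have hza := sub_ne_zero_of_mem_sphere_of_mem_ball hz ha
    have hzb := sub_ne_zero_of_mem_sphere_of_mem_ball hz hb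
    have hab' : a - b ≠ 0 := sub_ne_zero.2 hab
    simp only [smul_sub, smul_smul]
    rw [← sub_smul]
    congr 1
    field_simp
    ring
  rw [circleIntegral.integral_congr (pos_of_mem_ball ha).le partial_fractions,
    circleIntegral.integral_smul, circleIntegral.integral_sub
      (hsphere.circleIntegrable_sub_inv_smul ha) (hsphere.circleIntegrable_sub_inv_smul hb),
    hg.circleIntegral_sub_inv_smul ha, hg.circleIntegral_sub_inv_smul hb, ← smul_sub, smul_smul,
    div_eq_mul_inv, mul_comm]

end TwoPointCauchy

/-- For `Im(A) ≠ 0` and `R > |A|`, the counterclockwise circle integral over `{|z| = R}` of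
`z ↦ e^{iz}·((z−A)/(z−conj(A)))·(1 + B/z)` equals
`2πi·[e^{i·conj(A)}·(conj(A) − A + B − A·B/conj(A)) + A·B/conj(A)]`. -/
theorem stmt7 (A : ℂ) (hA : A.im ≠ 0) (B : ℂ) (R : ℝ) (hR : ‖A‖ < R) :
    (∮ z in C(0, R),
        Complex.exp (Complex.I * z) * ((z - A) / (z - (starRingEnd ℂ) A)) * (1 + B / z)) =
      2 * Real.pi * Complex.I *
        (Complex.exp (Complex.I * (starRingEnd ℂ) A) *
            ((starRingEnd ℂ) A - A + B - A * B / (starRingEnd ℂ) A)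
          + A * B / (starRingEnd ℂ) A) := by
  set Ā := (starRingEnd ℂ) A
  have hĀ : Ā ≠ 0 := fun h ↦ hA (by simpa [Ā] using congrArg im h)
  have hR₀ : 0 < R := (norm_nonneg A).trans_lt hR
  have hĀ_mem : Ā ∈ ball (0 : ℂ) R := by simpa [Ā] using hR
  have h0_mem : (0 : ℂ) ∈ ball (0 : ℂ) R := mem_ball_self hR₀
  let g : ℂ → ℂ := fun z ↦ exp (I * z) * (z - A) * (z + B)
  have integrand_eq : EqOn
      (fun z ↦ exp (I * z) * ((z - A) / (z - Ā)) * (1 + B / z))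
      (fun z ↦ ((z - Ā) * (z - 0))⁻¹ • g z) (sphere 0 R) := by
    intro z hz
    have hz₀ : z ≠ 0 := sub_zero z ▸ sub_ne_zero_of_mem_sphere_of_mem_ball hz h0_mem
    have hzĀ := sub_ne_zero_of_mem_sphere_of_mem_ball hz hĀ_mem
    simp only [g, smul_eq_mul, sub_zero]
    field_simp
  rw [circleIntegral.integral_congr hR₀.le integrand_eq,
    (Differentiable.differentiableOn (by fun_prop)).circleIntegral_sub_mul_sub_inv_smul
      hĀ_mem h0_mem hĀ]
  simp only [g, smul_eq_mul, mul_zero, exp_zero, sub_zero]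
  field_simp
  ring
end

section
/- Let A be a complex number with Im(A) ≠ 0, let B be a real number, and let R > |A| be a real number. Then the counterclockwise circle integral ∮_{|z|=R} e^{−iz}·((z − conj(A))/(z − A))·(1 + B/z) dz equals the negative of the complex conjugate of the counterclockwise circle integral ∮_{|z|=R} e^{iz}·((z − A)/(z − conj(A)))·(1 + B/z) dz. Consequently, for the Weierstrass data g(z) = e^{iz}(z−A)/(z−conj(A)), dh = (1 + B/z)dz, the horizontal period condition conj(∮ g·dh) = ∮ dh/g holds if and only if both integrals ∮ g·dh and ∮ dh/g vanish. -/
/-!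
The integrand of `∮ dh/g` is `z ↦ conj (G (conj z))`, where `G` is the integrand of `∮ g·dh`,
because `B` is real. Reflecting the circle `|z| = R` in the real axis reverses its orientation,
so `∮ dh/g = -conj (∮ g·dh)`. Writing `P = ∮ g·dh`, the period condition reads `conj P = -conj P`,
which forces `P = 0`.
-/

open Complex ComplexConjugate intervalIntegral

theorem circleIntegral_conj_comp_conj (f : ℂ → ℂ) (c : ℂ) (R : ℝ) :
    (∮ z in C(conj c, R), conj (f (conj z))) = -conj (∮ z in C(c, R), f z) := by
  set g : ℝ → ℂ := fun θ => deriv (circleMap c R) θ • f (circleMap c R θ)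
  have hg (θ : ℝ) : deriv (circleMap (conj c) R) θ • conj (f (conj (circleMap (conj c) R θ))) =
      -conj (g (2 * Real.pi - θ)) := by
    have hper (a : ℂ) : circleMap a R (2 * Real.pi - θ) = circleMap a R (-θ) := by
      rw [sub_eq_neg_add]
      exact periodic_circleMap a R (-θ)
    simp only [g, deriv_circleMap, smul_eq_mul, map_mul, conj_I, hper, conj_circleMap,
      conj_conj, map_zero, neg_neg]
    ring
  rw [circleIntegral, circleIntegral, integral_congr fun θ _ => hg θ, integral_neg,
    intervalIntegral_conj, integral_comp_sub_left g, sub_self, sub_zero]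

theorem stmt8_general (A : ℂ) (B : ℝ) (R : ℝ) :
    (∮ z in C(0, R),
        Complex.exp (-(Complex.I * z)) * ((z - (starRingEnd ℂ) A) / (z - A)) * (1 + (B : ℂ) / z))
      = -(starRingEnd ℂ) (∮ z in C(0, R),
          Complex.exp (Complex.I * z) * ((z - A) / (z - (starRingEnd ℂ) A)) * (1 + (B : ℂ) / z))
    ∧ (((starRingEnd ℂ) (∮ z in C(0, R),
          Complex.exp (Complex.I * z) * ((z - A) / (z - (starRingEnd ℂ) A)) * (1 + (B : ℂ) / z))
        = ∮ z in C(0, R),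
            Complex.exp (-(Complex.I * z)) * ((z - (starRingEnd ℂ) A) / (z - A)) *
              (1 + (B : ℂ) / z))
      ↔ ((∮ z in C(0, R),
            Complex.exp (Complex.I * z) * ((z - A) / (z - (starRingEnd ℂ) A)) * (1 + (B : ℂ) / z))
            = 0
        ∧ (∮ z in C(0, R),
            Complex.exp (-(Complex.I * z)) * ((z - (starRingEnd ℂ) A) / (z - A)) *
              (1 + (B : ℂ) / z)) = 0)) := by
  set G : ℂ → ℂ := fun z => exp (I * z) * ((z - A) / (z - conj A)) * (1 + B / z)
  have hreflect : (fun z => exp (-(I * z)) * ((z - conj A) / (z - A)) * (1 + B / z)) =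
      fun z => conj (G (conj z)) := by
    funext z
    simp only [G, map_mul, ← exp_conj, map_div₀, map_sub, map_add, map_one, conj_conj,
      conj_ofReal, conj_I]
    ring_nf
  have hperiod : (∮ z in C(0, R), exp (-(I * z)) * ((z - conj A) / (z - A)) * (1 + B / z)) =
      -conj (∮ z in C(0, R), G z) := by
    rw [hreflect, ← circleIntegral_conj_comp_conj G 0 R, map_zero]
  refine ⟨hperiod, ?_⟩
  rw [hperiod, CharZero.eq_neg_self_iff, map_eq_zero, neg_eq_zero, map_eq_zero, and_self]

/-- For the Case 2 Weierstrass data `g(z) = e^{iz}(z−A)/(z−conj(A))`, `dh = (1+B/z)dz`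
with `B` real, `Im(A) ≠ 0`, `R > |A|`: the circle integral `∮ dh/g` equals the negative
of the complex conjugate of `∮ g·dh`; consequently the horizontal period condition
`conj(∮ g·dh) = ∮ dh/g` holds iff both integrals vanish. -/
theorem stmt8 (A : ℂ) (hA : A.im ≠ 0) (B : ℝ) (R : ℝ) (hR : ‖A‖ < R) :
    (∮ z in C(0, R),
        Complex.exp (-(Complex.I * z)) * ((z - (starRingEnd ℂ) A) / (z - A)) * (1 + (B : ℂ) / z))
      = -(starRingEnd ℂ) (∮ z in C(0, R),
          Complex.exp (Complex.I * z) * ((z - A) / (z - (starRingEnd ℂ) A)) * (1 + (B : ℂ) / z))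
    ∧ (((starRingEnd ℂ) (∮ z in C(0, R),
          Complex.exp (Complex.I * z) * ((z - A) / (z - (starRingEnd ℂ) A)) * (1 + (B : ℂ) / z))
        = ∮ z in C(0, R),
            Complex.exp (-(Complex.I * z)) * ((z - (starRingEnd ℂ) A) / (z - A)) *
              (1 + (B : ℂ) / z))
      ↔ ((∮ z in C(0, R),
            Complex.exp (Complex.I * z) * ((z - A) / (z - (starRingEnd ℂ) A)) * (1 + (B : ℂ) / z))
            = 0
        ∧ (∮ z in C(0, R),
            Complex.exp (-(Complex.I * z)) * ((z - (starRingEnd ℂ) A) / (z - A)) *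
              (1 + (B : ℂ) / z)) = 0)) :=
  stmt8_general A B R
end

section
/- For every real B > 0 there exist real numbers x ∈ (3π/2, 5π/2) and y > 0 such that, setting A = x + i·y, the equation e^{i·conj(A)}·(conj(A)² − |A|² + B·(conj(A) − A)) = −A·B holds; equivalently, 2·y·e^{y}·e^{ix}·(y + i·(x + B)) = B·(x + i·y). -/
/-!
Expanding `conj A = x - iy` turns the first equation into the second, so it suffices to solve
`2y e^y e^{ix} (y + i(x + B)) = B (x + iy)`. For `x, y > 0` this splits into the argument condition
`x + arg (y + i(x + B)) = arg (x + iy) + 2π` and the modulus condition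
`2y e^y |y + i(x + B)| = B |x + iy|`. For fixed `y > 0` the argument side is strictly increasing
in `x` and crosses `2π` inside `(3π/2, 5π/2)`, so it has a root `x(y)`, continuous in `y` by
monotonicity. Along this curve the modulus condition fails in one direction for small `y` (the
factor `2y` wins) and in the other for large `y` (the factor `e^y` wins), and the intermediate
value theorem gives a solution.
-/

open Complex ComplexConjugate Set Filter Topology Real

theorem continuousAt_of_strictMonoOn_of_apply_eq {X α β : Type*} [TopologicalSpace X]
    [LinearOrder α] [TopologicalSpace α] [OrderTopology α] [DenselyOrdered α]
    [LinearOrder β] [TopologicalSpace β] [OrderClosedTopology β]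
    {F : X → α → β} {g : X → α} {I : Set α} {c : β} {y₀ : X} (hI : I ∈ 𝓝 (g y₀))
    (hmono : ∀ᶠ y in 𝓝 y₀, StrictMonoOn (F y) I)
    (hg : ∀ᶠ y in 𝓝 y₀, g y ∈ I ∧ F y (g y) = c)
    (hF : ∀ x ∈ I, ContinuousAt (fun y ↦ F y x) y₀) :
    ContinuousAt g y₀ := by
  obtain ⟨hgI, hgc⟩ := hg.self_of_nhds
  refine tendsto_order.2 ⟨fun a ha ↦ ?_, fun b hb ↦ ?_⟩
  · obtain ⟨l, ⟨hal, hl⟩, hlI⟩ := exists_Ioc_subset_of_mem_nhds' hI ha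
    obtain ⟨a', hla', ha'⟩ := exists_between hl
    have ha'I : a' ∈ I := hlI ⟨hla', ha'.le⟩
    have hlt : F y₀ a' < c := hgc ▸ hmono.self_of_nhds ha'I hgI ha'
    filter_upwards [hmono, hg, (hF a' ha'I).eventually_lt_const hlt] with y hFy ⟨hgyI, hgy⟩ hy
    exact (hal.trans_lt hla').trans ((hFy.lt_iff_lt ha'I hgyI).1 (hgy ▸ hy))
  · obtain ⟨u, ⟨hu, hub⟩, huI⟩ := exists_Ico_subset_of_mem_nhds' hI hb
    obtain ⟨b', hb', hb'u⟩ := exists_between hu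
    have hb'I : b' ∈ I := huI ⟨hb'.le, hb'u⟩
    have hlt : c < F y₀ b' := hgc ▸ hmono.self_of_nhds hgI hb'I hb'
    filter_upwards [hmono, hg, (hF b' hb'I).eventually_const_lt hlt] with y hFy ⟨hgyI, hgy⟩ hy
    exact ((hFy.lt_iff_lt hgyI hb'I).1 (hgy ▸ hy)).trans (hb'u.trans_le hub)

theorem Complex.arg_eq_arctan_of_re_pos {z : ℂ} (hz : 0 < z.re) :
    arg z = Real.arctan (z.im / z.re) := by
  have h := abs_lt.1 (abs_arg_lt_pi_div_two_iff.2 (Or.inl hz))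
  rw [← tan_arg, Real.arctan_tan h.1 h.2]

theorem Complex.ofReal_mul_exp_mul_eq_of_arg_add {z w : ℂ} {r s t : ℝ}
    (hnorm : r * ‖w‖ = s * ‖z‖) (harg : t + arg w = arg z + 2 * π) :
    r * exp (t * I) * w = s * z := by
  have hexp : exp (t * I) * exp (arg w * I) = exp (arg z * I) := by
    rw [← exp_add, ← add_mul, ← ofReal_add, harg, ofReal_add, add_mul, exp_add,
      ofReal_mul, ofReal_ofNat, exp_two_pi_mul_I, mul_one]
  rw [← norm_mul_exp_arg_mul_I w, ← norm_mul_exp_arg_mul_I z, ← hexp]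
  have hnormC : (r : ℂ) * ‖w‖ = s * ‖z‖ := by exact_mod_cast hnorm
  linear_combination exp (t * I) * exp (arg w * I) * hnormC

theorem exp_I_mul_conj_mul_eq (x y B : ℝ) :
    exp (I * conj ((x : ℂ) + y * I)) *
        (conj ((x : ℂ) + y * I) ^ 2 - ((‖(x : ℂ) + y * I‖ : ℝ) : ℂ) ^ 2
          + B * (conj ((x : ℂ) + y * I) - (x + y * I)))
      = -(2 * y * (Real.exp y : ℂ) * exp (I * x) * (y + I * (x + B))) := by
  set A : ℂ := x + y * I with hA
  have hconj : conj A = x - y * I := by simp [hA, conj_ofReal]; ring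
  have hnorm : ((‖A‖ : ℝ) : ℂ) ^ 2 = (x : ℂ) ^ 2 + (y : ℂ) ^ 2 := by
    rw [← ofReal_pow, ← normSq_eq_norm_sq, normSq_add_mul_I]; push_cast; ring
  have hexp : exp (I * conj A) = Real.exp y * exp (I * x) := by
    rw [hconj, ofReal_exp, ← Complex.exp_add]
    congr 1
    linear_combination (-(y : ℂ)) * I_sq
  rw [hexp, hnorm, hconj]
  linear_combination ((y : ℂ) ^ 2 * Real.exp y * exp (I * x)) * I_sq

/-- `x + arg (y + i(x + B)) - arg (x + iy)`, written with `arg = arctan (im / re)`, which is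
valid for `x, y > 0`. -/
noncomputable def phase (B y x : ℝ) : ℝ :=
  x + Real.arctan ((x + B) / y) - Real.arctan (y / x)

section phase

variable {B y : ℝ}

theorem phase_strictMonoOn (hy : 0 < y) : StrictMonoOn (phase B y) (Ioi 0) := by
  intro a ha b hb hab
  have h₁ : Real.arctan ((a + B) / y) ≤ Real.arctan ((b + B) / y) :=
    Real.arctan_strictMono.monotone (by gcongr)
  have h₂ : Real.arctan (y / b) ≤ Real.arctan (y / a) :=
    Real.arctan_strictMono.monotone (div_le_div_of_nonneg_left hy.le ha hab.le)
  simp only [phase]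
  linarith

theorem continuousOn_phase : ContinuousOn (phase B y) (Ioi 0) := by
  have hne : ∀ x ∈ Ioi (0 : ℝ), x ≠ 0 := fun x hx ↦ hx.ne'
  unfold phase
  fun_prop (disch := exact hne)

theorem continuousAt_phase_of_ne_zero {x : ℝ} (hx : x ≠ 0) (hy : 0 < y) :
    ContinuousAt (fun t ↦ phase B t x) y := by
  unfold phase
  fun_prop (disch := first | exact hy.ne' | exact hx)

theorem phase_three_pi_div_two_lt (hy : 0 < y) : phase B y (3 * π / 2) < 2 * π := by
  have h₁ := Real.arctan_lt_pi_div_two ((3 * π / 2 + B) / y)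
  have h₂ : 0 < Real.arctan (y / (3 * π / 2)) := Real.arctan_pos.2 (by positivity)
  simp only [phase]
  linarith

theorem two_pi_lt_phase_five_pi_div_two (hB : 0 ≤ B) (hy : 0 < y) :
    2 * π < phase B y (5 * π / 2) := by
  have h₁ : 0 < Real.arctan ((5 * π / 2 + B) / y) := Real.arctan_pos.2 (by positivity)
  have h₂ := Real.arctan_lt_pi_div_two (y / (5 * π / 2))
  simp only [phase]
  linarith

theorem exists_phase_eq_two_pi (hB : 0 ≤ B) (hy : 0 < y) :
    ∃ x ∈ Ioo (3 * π / 2) (5 * π / 2), phase B y x = 2 * π := by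
  have hπ := Real.pi_pos
  have hcont : ContinuousOn (phase B y) (Icc (3 * π / 2) (5 * π / 2)) :=
    continuousOn_phase.mono fun x hx ↦ lt_of_lt_of_le (by positivity) hx.1
  exact intermediate_value_Ioo (by linarith) hcont
    ⟨phase_three_pi_div_two_lt hy, two_pi_lt_phase_five_pi_div_two hB hy⟩

end phase

theorem polar_eq_of_phase_eq {B x y : ℝ} (hx : 0 < x) (hy : 0 < y) (hphase : phase B y x = 2 * π)
    (hnorm : 2 * y * Real.exp y * ‖(y : ℂ) + I * (x + B)‖ = B * ‖(x : ℂ) + I * y‖) :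
    2 * y * (Real.exp y : ℂ) * exp (I * x) * (y + I * (x + B)) = B * (x + I * y) := by
  have harg : x + arg ((y : ℂ) + I * (x + B)) = arg ((x : ℂ) + I * y) + 2 * π := by
    have hw_re : ((y : ℂ) + I * (x + B)).re = y := by simp
    have hw_im : ((y : ℂ) + I * (x + B)).im = x + B := by simp
    have hz_re : ((x : ℂ) + I * y).re = x := by simp
    have hz_im : ((x : ℂ) + I * y).im = y := by simp
    rw [arg_eq_arctan_of_re_pos (hw_re.symm ▸ hy), arg_eq_arctan_of_re_pos (hz_re.symm ▸ hx),
      hw_re, hw_im, hz_re, hz_im]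
    simp only [phase] at hphase
    linarith
  rw [mul_comm I (x : ℂ)]
  exact_mod_cast ofReal_mul_exp_mul_eq_of_arg_add hnorm harg

noncomputable def modulusGap (B y x : ℝ) : ℝ :=
  2 * y * Real.exp y * ‖(y : ℂ) + I * (x + B)‖ - B * ‖(x : ℂ) + I * y‖

theorem norm_ofReal_add_I_mul_le (a b : ℝ) : ‖(a : ℂ) + I * b‖ ≤ |a| + |b| :=
  (norm_add_le _ _).trans (by simp)

theorem abs_le_norm_ofReal_add_I_mul (a b : ℝ) : |a| ≤ ‖(a : ℂ) + I * b‖ := by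
  simpa using abs_re_le_norm ((a : ℂ) + I * b)

theorem modulusGap_neg {B x y : ℝ} (hB : 0 < B) (hx₁ : 1 < x) (hx₁₀ : x < 10) (hy : 0 < y)
    (hy₁ : y ≤ 1) (hyB : 6 * y * (11 + B) ≤ B) : modulusGap B y x < 0 := by
  have hw := norm_ofReal_add_I_mul_le y (x + B)
  have hz := abs_le_norm_ofReal_add_I_mul x y
  push_cast at hw
  rw [abs_of_pos hy, abs_of_pos (by linarith)] at hw
  rw [abs_of_pos (by linarith)] at hz
  have he : Real.exp y < 3 :=
    (Real.exp_le_exp.2 hy₁).trans_lt (Real.exp_one_lt_d9.trans (by norm_num))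
  have := calc
    2 * y * Real.exp y * ‖(y : ℂ) + I * (x + B)‖ ≤ 2 * y * 3 * (y + (x + B)) := by gcongr
    _ ≤ 6 * y * (11 + B) := by nlinarith
    _ ≤ B := hyB
    _ < B * x := by nlinarith
    _ ≤ B * ‖(x : ℂ) + I * y‖ := by gcongr
  unfold modulusGap
  linarith

theorem modulusGap_pos {B x y : ℝ} (hB : 0 ≤ B) (hx₀ : 0 < x) (hx₁₀ : x < 10)
    (hyB : B + 10 ≤ y) :
    0 < modulusGap B y x := by
  have hy : 0 < y := by linarith
  have hw := abs_le_norm_ofReal_add_I_mul y (x + B)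
  have hz := norm_ofReal_add_I_mul_le x y
  push_cast at hw
  rw [abs_of_pos hy] at hw
  rw [abs_of_pos hx₀, abs_of_pos hy] at hz
  have he : y + 1 ≤ Real.exp y := Real.add_one_le_exp y
  have := calc
    B * ‖(x : ℂ) + I * y‖ ≤ B * (x + y) := by gcongr
    _ ≤ y * (2 * y) := by nlinarith
    _ < 2 * y * (y + 1) * y := by nlinarith [pow_pos hy 3]
    _ ≤ 2 * y * Real.exp y * ‖(y : ℂ) + I * (x + B)‖ := by gcongr
  unfold modulusGap
  linarith

theorem exists_continuousOn_phase_eq_two_pi {B : ℝ} (hB : 0 ≤ B) :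
    ∃ g : ℝ → ℝ, ContinuousOn g (Ioi 0) ∧
      ∀ y ∈ Ioi (0 : ℝ),
        g y ∈ Ioo (3 * π / 2) (5 * π / 2) ∧ phase B y (g y) = 2 * π := by
  choose! g hgI hg using fun y (hy : y ∈ Ioi (0 : ℝ)) ↦ exists_phase_eq_two_pi hB hy
  have hg_pos : ∀ y ∈ Ioi (0 : ℝ), g y ∈ Ioi 0 := fun y hy ↦
    mem_Ioi.2 <| lt_trans (by positivity) (hgI y hy).1
  refine ⟨g, fun y hy ↦ ?_, fun y hy ↦ ⟨hgI y hy, hg y hy⟩⟩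
  refine ContinuousAt.continuousWithinAt <|
    continuousAt_of_strictMonoOn_of_apply_eq (F := fun t x ↦ phase B t x) (c := 2 * π)
      (Ioi_mem_nhds (hg_pos y hy)) ?_ ?_ fun x hx ↦ continuousAt_phase_of_ne_zero (ne_of_gt hx) hy
  · filter_upwards [Ioi_mem_nhds hy] with t ht using phase_strictMonoOn ht
  · filter_upwards [Ioi_mem_nhds hy] with t ht using ⟨hg_pos t ht, hg t ht⟩

theorem exists_phase_eq_two_pi_and_modulusGap_eq_zero {B : ℝ} (hB : 0 < B) :
    ∃ x ∈ Ioo (3 * π / 2) (5 * π / 2), ∃ y, 0 < y ∧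
      phase B y x = 2 * π ∧ modulusGap B y x = 0 := by
  obtain ⟨g, hg_cont, hg⟩ := exists_continuousOn_phase_eq_two_pi hB.le
  have hg_bounds : ∀ y ∈ Ioi (0 : ℝ), 1 < g y ∧ g y < 10 := fun y hy ↦ by
    have := (hg y hy).1
    constructor <;> nlinarith [this.1, this.2, pi_gt_three, pi_lt_four]
  have hgap_cont : ContinuousOn (fun y ↦ modulusGap B y (g y)) (Ioi 0) := by
    unfold modulusGap
    fun_prop
  set δ := min 1 (B / (6 * (11 + B)))
  have hδ : 0 < δ := lt_min one_pos (by positivity)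
  have hneg : modulusGap B δ (g δ) < 0 := by
    refine modulusGap_neg hB (hg_bounds δ hδ).1 (hg_bounds δ hδ).2 hδ (min_le_left _ _) ?_
    have := min_le_right 1 (B / (6 * (11 + B)))
    rw [le_div_iff₀ (by positivity)] at this
    linarith
  have hpos : 0 < modulusGap B (B + 10) (g (B + 10)) := by
    have hK : B + 10 ∈ Ioi (0 : ℝ) := mem_Ioi.2 (by linarith)
    exact modulusGap_pos hB.le (by linarith [(hg_bounds _ hK).1]) (hg_bounds _ hK).2 le_rfl
  obtain ⟨y, hy, hy_gap⟩ := intermediate_value_Icc ((min_le_left _ _).trans (by linarith))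
    (hgap_cont.mono fun t ht ↦ hδ.trans_le ht.1) ⟨hneg.le, hpos.le⟩
  have hy₀ : 0 < y := hδ.trans_le hy.1
  exact ⟨g y, (hg y hy₀).1, y, hy₀, (hg y hy₀).2, hy_gap⟩

/-- Assertion 6.6: for every `B > 0` there exist `x ∈ (3π/2, 5π/2)` and `y > 0` such that,
with `A = x + iy`, `e^{i·conj(A)}·(conj(A)² − |A|² + B·(conj(A) − A)) = −A·B`;
equivalently `2y·e^y·e^{ix}·(y + i(x+B)) = B·(x+iy)`. -/
theorem stmt9 (B : ℝ) (hB : 0 < B) :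
    ∃ x y : ℝ, 3 * Real.pi / 2 < x ∧ x < 5 * Real.pi / 2 ∧ 0 < y ∧
      Complex.exp (Complex.I * (starRingEnd ℂ) ((x : ℂ) + (y : ℂ) * Complex.I)) *
          ((starRingEnd ℂ) ((x : ℂ) + (y : ℂ) * Complex.I) ^ 2
            - ((‖((x : ℂ) + (y : ℂ) * Complex.I)‖ : ℝ) : ℂ) ^ 2
            + (B : ℂ) * ((starRingEnd ℂ) ((x : ℂ) + (y : ℂ) * Complex.I)
                - ((x : ℂ) + (y : ℂ) * Complex.I)))
        = -(((x : ℂ) + (y : ℂ) * Complex.I) * (B : ℂ))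
      ∧ 2 * (y : ℂ) * (Real.exp y : ℂ) * Complex.exp (Complex.I * (x : ℂ)) *
          ((y : ℂ) + Complex.I * ((x : ℂ) + (B : ℂ)))
        = (B : ℂ) * ((x : ℂ) + Complex.I * (y : ℂ)) := by
  obtain ⟨x, ⟨hx₁, hx₂⟩, y, hy, hphase, hgap⟩ :=
    exists_phase_eq_two_pi_and_modulusGap_eq_zero hB
  have hpolar :=
    polar_eq_of_phase_eq (lt_trans (by positivity) hx₁) hy hphase (sub_eq_zero.1 hgap)
  refine ⟨x, y, hx₁, hx₂, hy, ?_, hpolar⟩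
  rw [exp_I_mul_conj_mul_eq, hpolar]
  ring
end

section
/- Let ρ > 0 and let f be complex differentiable on {z ∈ ℂ : |z| > ρ} such that w ↦ f(1/w) extends holomorphically across w = 0 with value 0 at 0. Let λ be a real number, μ a complex number, and R > max(ρ, |μ|) a real number. Then the limit as T → ∞ of ∫_R^T e^{it}·[ e^{−conj(f(t))}·(1 + λ/(t − conj(μ))) − e^{f(t)}·(1 + λ/(t − μ)) ] dt exists in ℂ. -/
/-!
For `t > R` the bracket is `G (1 / t)`, where `G` is `C¹` near `0` (it is built from the analytic
germ `g` of `f` at `∞`, its conjugate, and `λ s / (1 - μ s)`) and `G 0 = 0`. Hence the bracket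
tends to `0` and its derivative `-G' (1 / t) / t²` is integrable at `∞`. Integrating by parts
against `e^{it} = (-i e^{it})'` turns `∫ e^{it} G (1 / t) dt` into a vanishing boundary term
plus an absolutely convergent integral.
-/

open Complex Filter Topology MeasureTheory Set ComplexConjugate

theorem exists_tendsto_intervalIntegral_of_le {E : Type*} [NormedAddCommGroup E]
    [NormedSpace ℝ E] {φ : ℝ → E} {a b : ℝ} (hab : a ≤ b) (hφ : ContinuousOn φ (Ici a))
    (h : ∃ L, Tendsto (fun T => ∫ t in b..T, φ t) atTop (𝓝 L)) :
    ∃ L, Tendsto (fun T => ∫ t in a..T, φ t) atTop (𝓝 L) := by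
  obtain ⟨L, hL⟩ := h
  refine ⟨(∫ t in a..b, φ t) + L, (hL.const_add _).congr' ?_⟩
  filter_upwards [eventually_ge_atTop b] with T hT
  have hint : ∀ c d, a ≤ c → c ≤ d → IntervalIntegrable φ volume c d := fun c d hc hcd =>
    (hφ.mono (by rw [uIcc_of_le hcd]; exact Icc_subset_Ici_iff hcd |>.mpr hc)).intervalIntegrable
  exact intervalIntegral.integral_add_adjacent_intervals (hint a b le_rfl hab)
    (hint b T hab hT)

theorem exists_tendsto_integral_exp_mul_of_hasDerivAt {F F' : ℝ → ℂ} {a : ℝ}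
    (hF : ∀ t ∈ Ici a, HasDerivAt F (F' t) t) (hF' : IntegrableOn F' (Ioi a))
    (hF0 : Tendsto F atTop (𝓝 0)) :
    ∃ L, Tendsto (fun T => ∫ t in a..T, exp (I * t) * F t) atTop (𝓝 L) := by
  set v : ℝ → ℂ := fun t => -I * exp (I * t)
  have hv : ∀ t : ℝ, HasDerivAt v (exp (I * t)) t := fun t => by
    have h : HasDerivAt v (-I * (exp (I * t) * (I * 1))) t :=
      ((((hasDerivAt_id (t : ℂ)).const_mul I).cexp).const_mul (-I)).comp_ofReal
    convert h using 1
    linear_combination exp (I * t) * I_mul_I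
  have hv_norm : ∀ t, ‖v t‖ = 1 := fun t => by simp [v, norm_exp]
  have hF'v : IntegrableOn (fun t => F' t * v t) (Ioi a) :=
    hF'.mul_bdd (by fun_prop : Continuous v).aestronglyMeasurable
      (.of_forall fun t => (hv_norm t).le)
  have hparts : ∀ T ≥ a, ∫ t in a..T, exp (I * t) * F t
      = F T * v T - F a * v a - ∫ t in a..T, F' t * v t := fun T hT => by
    have hsub : uIcc a T ⊆ Ici a := by rw [uIcc_of_le hT]; exact Icc_subset_Ici_self
    simp_rw [mul_comm (exp _)]
    exact intervalIntegral.integral_mul_deriv_eq_deriv_mul (fun t ht => hF t (hsub ht))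
      (fun t _ => hv t) ((intervalIntegrable_iff_integrableOn_Ioc_of_le hT).mpr
        (hF'.mono_set Ioc_subset_Ioi_self))
      ((by fun_prop : Continuous fun t : ℝ => exp (I * t)).intervalIntegrable _ _)
  have hboundary : Tendsto (fun T => F T * v T) atTop (𝓝 0) := by
    refine squeeze_zero_norm (fun T => ?_) (tendsto_zero_iff_norm_tendsto_zero.mp hF0)
    rw [norm_mul, hv_norm, mul_one]
  refine ⟨0 - F a * v a - ∫ t in Ioi a, F' t * v t, ?_⟩
  refine Tendsto.congr' (EventuallyEq.symm ?_) ((hboundary.sub_const _).sub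
    (intervalIntegral_tendsto_integral_Ioi a hF'v tendsto_id))
  filter_upwards [eventually_ge_atTop a] with T hT using hparts T hT

theorem ContDiffAt.eventually_exists_tendsto_integral_exp_mul_comp_inv {G : ℝ → ℂ}
    (hG : ContDiffAt ℝ 1 G 0) (hG0 : G 0 = 0) :
    ∀ᶠ a in atTop,
      ∃ L, Tendsto (fun T => ∫ t in a..T, Complex.exp (I * t) * G t⁻¹) atTop (𝓝 L) := by
  set G' : ℝ → ℂ := fun t => -(t ^ 2)⁻¹ • deriv G t⁻¹
  have hderiv : ∀ᶠ t in atTop, HasDerivAt (fun t => G t⁻¹) (G' t) t := by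
    have hdiff : ∀ᶠ s in 𝓝 0, DifferentiableAt ℝ G s :=
      (hG.eventually (by simp)).mono fun s hs => hs.differentiableAt one_ne_zero
    filter_upwards [tendsto_inv_atTop_zero.eventually hdiff, eventually_gt_atTop 0]
      with t ht ht0
    exact ht.hasDerivAt.scomp t (hasDerivAt_inv ht0.ne')
  have hint : IntegrableAtFilter G' atTop := by
    have hbdd : (fun t => deriv G t⁻¹) =O[atTop] (1 : ℝ → ℝ) :=
      (((hG.continuousAt_fderiv one_ne_zero).clm_apply continuousAt_const).tendsto.comp
        tendsto_inv_atTop_zero).isBigO_one ℝ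
    have hpow : (fun t : ℝ => -(t ^ 2)⁻¹) =O[atTop] fun t => t ^ (-2 : ℝ) := by
      refine (Asymptotics.isBigO_refl _ _).neg_left.congr' (.refl _ _) ?_
      filter_upwards [eventually_gt_atTop 0] with t ht
      rw [Real.rpow_neg ht.le, Real.rpow_two]
    have hmeas : StronglyMeasurableAtFilter G' atTop :=
      (((measurable_id.pow_const 2).inv.neg.smul ((measurable_deriv G).comp measurable_inv)
        ).aestronglyMeasurable).stronglyMeasurableAtFilter
    have hG'O : G' =O[atTop] fun t => t ^ (-2 : ℝ) :=
      (hpow.smul hbdd).congr_right fun t => by simp only [Pi.one_apply, smul_eq_mul, mul_one]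
    exact hG'O.integrableAtFilter hmeas
      (integrableAtFilter_rpow_atTop_iff.mpr (by norm_num))
  obtain ⟨a₀, ha₀⟩ := integrableAtFilter_atTop_iff.mp hint
  obtain ⟨a₁, ha₁⟩ := eventually_atTop.mp hderiv
  filter_upwards [eventually_ge_atTop (max a₀ a₁)] with a ha
  refine exists_tendsto_integral_exp_mul_of_hasDerivAt
    (fun t ht => ha₁ t ((le_max_right _ _).trans (ha.trans ht)))
    (ha₀.mono_set (Ioi_subset_Ici ((le_max_left _ _).trans ha))) ?_
  simpa [hG0, Function.comp_def] using hG.continuousAt.tendsto.comp tendsto_inv_atTop_zero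

noncomputable def amplitude (f : ℂ → ℂ) (lam : ℝ) (μ : ℂ) (t : ℝ) : ℂ :=
  exp (-conj (f t)) * (1 + lam / (t - conj μ)) - exp (f t) * (1 + lam / (t - μ))

noncomputable def amplitudeAtInfinity (g : ℂ → ℂ) (lam : ℝ) (μ : ℂ) (s : ℝ) : ℂ :=
  exp (-conj (g s)) * (1 + lam * s / (1 - conj μ * s)) - exp (g s) * (1 + lam * s / (1 - μ * s))

theorem ofReal_sub_ne_zero_of_norm_lt {t : ℝ} {ν : ℂ} (h : ‖ν‖ < t) : (t : ℂ) - ν ≠ 0 := by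
  refine sub_ne_zero.mpr fun h' => h.ne' ?_
  rw [← h', norm_real, Real.norm_of_nonneg ((norm_nonneg ν).trans h.le)]

theorem continuousOn_amplitude {f : ℂ → ℂ} {ρ : ℝ} (hf : ContinuousOn f {z | ρ < ‖z‖})
    (lam : ℝ) (μ : ℂ) : ContinuousOn (amplitude f lam μ) (Ioi (max ρ ‖μ‖)) := by
  intro t ht
  obtain ⟨hρt, hμt⟩ := max_lt_iff.mp (mem_Ioi.mp ht)
  have hnorm : ‖(t : ℂ)‖ = t := by
    rw [norm_real, Real.norm_of_nonneg ((norm_nonneg μ).trans hμt.le)]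
  have hft : ContinuousAt f t :=
    hf.continuousAt ((isOpen_lt continuous_const continuous_norm).mem_nhds
      (show ρ < ‖(t : ℂ)‖ by rwa [hnorm]))
  have hf' : ContinuousAt (fun s : ℝ => f s) t := hft.comp continuous_ofReal.continuousAt
  have h1 := ofReal_sub_ne_zero_of_norm_lt (ν := conj μ) (by rwa [norm_conj])
  have h2 := ofReal_sub_ne_zero_of_norm_lt hμt
  unfold amplitude
  exact ContinuousAt.continuousWithinAt (by fun_prop (disch := assumption))

theorem amplitude_eq_amplitudeAtInfinity_inv {f g : ℂ → ℂ} {ρ : ℝ} (hρ : 0 < ρ)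
    (hfg : ∀ w : ℂ, w ≠ 0 → ‖w‖ < 1 / ρ → f (1 / w) = g w) (lam : ℝ) {μ : ℂ} {t : ℝ}
    (ht : max ρ ‖μ‖ < t) : amplitude f lam μ t = amplitudeAtInfinity g lam μ t⁻¹ := by
  obtain ⟨hρt, hμt⟩ := max_lt_iff.mp ht
  have ht0 : 0 < t := hρ.trans hρt
  have hft : f t = g (t⁻¹ : ℝ) := by
    have hnorm : ‖((t⁻¹ : ℝ) : ℂ)‖ < 1 / ρ := by
      rw [norm_real, Real.norm_of_nonneg (inv_nonneg.mpr ht0.le), one_div]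
      exact inv_strictAnti₀ hρ hρt
    simpa using hfg _ (by simpa using ht0.ne') hnorm
  have hrecip : ∀ ν : ℂ, ‖ν‖ < t →
      (lam : ℂ) / (t - ν) = lam * (t⁻¹ : ℝ) / (1 - ν * (t⁻¹ : ℝ)) := by
    intro ν hν
    have := ofReal_sub_ne_zero_of_norm_lt hν
    have ht0' : (t : ℂ) ≠ 0 := by exact_mod_cast ht0.ne'
    push_cast
    field_simp
  unfold amplitude amplitudeAtInfinity
  rw [hft, hrecip μ hμt, hrecip (conj μ) (by rwa [norm_conj])]

theorem contDiffAt_amplitudeAtInfinity {g : ℂ → ℂ} (hg : AnalyticAt ℂ g 0) (lam : ℝ) (μ : ℂ)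
    {n : WithTop ℕ∞} : ContDiffAt ℝ n (amplitudeAtInfinity g lam μ) 0 := by
  have hofReal : ContDiff ℝ n fun s : ℝ => (s : ℂ) := ofRealCLM.contDiff
  have hconj : ContDiff ℝ n fun z : ℂ => conj z := conjCLE.contDiff
  have hg' : ContDiffAt ℝ n g ((0 : ℝ) : ℂ) := by
    rw [ofReal_zero]
    exact hg.contDiffAt.restrict_scalars ℝ
  unfold amplitudeAtInfinity
  simp only [div_eq_mul_inv]
  fun_prop (disch := simp)

/-- Let `f` be holomorphic on `{|z| > ρ}` and holomorphic at `∞` with `f(∞) = 0`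
(i.e. `w ↦ f(1/w)` extends to a function `g` holomorphic near `0` with `g(0) = 0`).
For real `lam`, complex `μ` and `R > max(ρ, |μ|)`, the integral
`∫_R^T e^{it}[e^{−conj(f(t))}(1 + lam/(t − conj(μ))) − e^{f(t)}(1 + lam/(t − μ))] dt`
converges as `T → ∞`. -/
theorem stmt13 (ρ : ℝ) (hρ : 0 < ρ) (f : ℂ → ℂ)
    (hf : DifferentiableOn ℂ f {z : ℂ | ρ < ‖z‖})
    (g : ℂ → ℂ) (hg : AnalyticAt ℂ g 0) (hg0 : g 0 = 0)
    (hfg : ∀ w : ℂ, w ≠ 0 → ‖w‖ < 1 / ρ → f (1 / w) = g w)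
    (lam : ℝ) (μ : ℂ) (R : ℝ) (hR : max ρ ‖μ‖ < R) :
    ∃ L : ℂ, Filter.Tendsto (fun T : ℝ => ∫ t in R..T,
        Complex.exp (Complex.I * (t : ℂ)) *
          (Complex.exp (-(starRingEnd ℂ) (f (t : ℂ))) *
              (1 + (lam : ℂ) / ((t : ℂ) - (starRingEnd ℂ) μ))
            - Complex.exp (f (t : ℂ)) * (1 + (lam : ℂ) / ((t : ℂ) - μ))))
      Filter.atTop (nhds L) := by
  show ∃ L, Tendsto (fun T => ∫ t in R..T, exp (I * t) * amplitude f lam μ t) atTop (𝓝 L)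
  obtain ⟨a, ⟨L, hL⟩, haR⟩ := ((contDiffAt_amplitudeAtInfinity hg lam μ
    ).eventually_exists_tendsto_integral_exp_mul_comp_inv (by simp [amplitudeAtInfinity, hg0])
    ).and (eventually_ge_atTop R) |>.exists
  have hcont : ContinuousOn (fun t : ℝ => exp (I * t) * amplitude f lam μ t) (Ici R) :=
    (by fun_prop : Continuous fun t : ℝ => exp (I * t)).continuousOn.mul
      ((continuousOn_amplitude hf.continuousOn lam μ).mono (Ici_subset_Ioi.mpr hR))
  refine exists_tendsto_intervalIntegral_of_le haR hcont ⟨L, hL.congr' ?_⟩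
  filter_upwards [eventually_ge_atTop a] with T hT
  refine intervalIntegral.integral_congr fun t ht => ?_
  rw [uIcc_of_le hT] at ht
  rw [amplitude_eq_amplitudeAtInfinity_inv hρ hfg lam (hR.trans_le (haR.trans ht.1))]
end

section
/- Let C₁ ∈ ℂ, D > 0, T₀ > 0, λ ∈ ℝ and μ ∈ ℂ with |μ| < T₀. Let f be a complex-valued function on [T₀, ∞) such that |f(t) − C₁/t| ≤ D/t² for all t ≥ T₀. Then there exist T₁ ≥ T₀ and D' > 0 such that for all real t ≥ T₁: | e^{−conj(f(t))}·(1 + λ/(t − conj(μ))) − e^{f(t)}·(1 + λ/(t − μ)) + 2·Re(C₁)/t | ≤ D'/t². -/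
/-!
Since `exp z * (1 + a) = 1 + z + a + O(‖z‖² + ‖a‖‖z‖)` for small `z`, and both `f(t)` and
`λ / (t - μ)` are `O(1/t)`, the left-hand side equals, up to `O(1/t²)`,
`(λ / (t - conj μ) - λ / (t - μ)) - (f t - C₁ / t) - conj (f t - C₁ / t)`:
the first-order terms `-conj (f t) - f t` cancel against `2 Re C₁ / t = C₁ / t + conj (C₁ / t)`.
Both remaining differences are `O(1/t²)`.
-/

open Complex ComplexConjugate Filter Topology Asymptotics

theorem norm_exp_mul_one_add_sub_le {z a : ℂ} (hz : ‖z‖ ≤ 1) :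
    ‖exp z * (1 + a) - (1 + z + a)‖ ≤ ‖z‖ ^ 2 + 2 * ‖a‖ * ‖z‖ :=
  calc ‖exp z * (1 + a) - (1 + z + a)‖ = ‖(exp z - 1 - z) + a * (exp z - 1)‖ := by ring_nf
    _ ≤ ‖exp z - 1 - z‖ + ‖a‖ * ‖exp z - 1‖ := (norm_add_le _ _).trans_eq (by rw [norm_mul])
    _ ≤ ‖z‖ ^ 2 + ‖a‖ * (2 * ‖z‖) := by
      gcongr
      exacts [norm_exp_sub_one_sub_id_le hz, norm_exp_sub_one_le hz]
    _ = ‖z‖ ^ 2 + 2 * ‖a‖ * ‖z‖ := by ring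

theorem isBigO_exp_mul_one_add_sub {α : Type*} {l : Filter α} {z a : α → ℂ} {g : α → ℝ}
    (hz : z =O[l] g) (ha : a =O[l] g) (hz₀ : Tendsto z l (𝓝 0)) :
    (fun x => exp (z x) * (1 + a x) - (1 + z x + a x)) =O[l] fun x => g x ^ 2 := by
  have hbound : (fun x => ‖z x‖ ^ 2 + 2 * ‖a x‖ * ‖z x‖) =O[l] fun x => g x ^ 2 := by
    simp only [sq]
    exact (hz.norm_left.mul hz.norm_left).add
      ((ha.norm_left.const_mul_left 2).mul hz.norm_left)
  refine (IsBigO.of_norm_eventuallyLE ?_).trans hbound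
  filter_upwards [(tendsto_zero_iff_norm_tendsto_zero.1 hz₀).eventually_le_const zero_lt_one]
    with x hx
  exact norm_exp_mul_one_add_sub_le hx

theorem isBigO_ofReal_sub_inv (p : ℂ) :
    (fun t : ℝ => ((t : ℂ) - p)⁻¹) =O[atTop] fun t => t⁻¹ := by
  have hequiv : (fun t : ℝ => (t : ℂ) - p) ~[atTop] fun t => (t : ℂ) := by
    refine IsLittleO.congr_left (f₁ := fun _ => -p) (isLittleO_const_left.2 (Or.inr ?_))
      fun t => by simp
    simpa [Function.comp_def] using tendsto_abs_atTop_atTop (G := ℝ)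
  refine hequiv.inv.isBigO.trans (IsBigO.of_bound 1 ?_)
  simp

theorem eventually_ofReal_sub_ne_zero (p : ℂ) : ∀ᶠ t : ℝ in atTop, (t : ℂ) - p ≠ 0 := by
  filter_upwards [eventually_gt_atTop ‖p‖] with t ht h
  have hnorm : |t| = ‖p‖ := by simpa using congrArg norm (sub_eq_zero.1 h)
  linarith [le_abs_self t]

theorem isBigO_ofReal_sub_inv_sub_ofReal_sub_inv (p q : ℂ) :
    (fun t : ℝ => ((t : ℂ) - p)⁻¹ - ((t : ℂ) - q)⁻¹) =O[atTop] fun t => t⁻¹ ^ 2 := by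
  have hmain : (fun t : ℝ => (p - q) * (((t : ℂ) - p)⁻¹ * ((t : ℂ) - q)⁻¹)) =O[atTop]
      fun t => t⁻¹ ^ 2 := by
    simpa only [sq] using
      ((isBigO_ofReal_sub_inv p).mul (isBigO_ofReal_sub_inv q)).const_mul_left (p - q)
  refine hmain.congr' ?_ EventuallyEq.rfl
  filter_upwards [eventually_ofReal_sub_ne_zero p, eventually_ofReal_sub_ne_zero q] with t hp hq
  rw [inv_sub_inv' hp hq]
  ring

theorem two_mul_re_div_ofReal (C : ℂ) (t : ℝ) :
    2 * (C.re : ℂ) / t = C / t + conj (C / t) := by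
  rw [map_div₀, conj_ofReal, ← add_div, add_conj]
  push_cast
  ring

theorem isBigO_exp_conj_sub_exp_add_two_re_div {C₁ μ : ℂ} {lam : ℝ} {f : ℝ → ℂ}
    (hf : (fun t : ℝ => f t - C₁ / t) =O[atTop] fun t => t⁻¹ ^ 2) :
    (fun t : ℝ => exp (-conj (f t)) * (1 + lam / (t - conj μ))
        - exp (f t) * (1 + lam / (t - μ)) + 2 * (C₁.re : ℂ) / t) =O[atTop] fun t => t⁻¹ ^ 2 := by
  have hinv₀ : Tendsto (fun t : ℝ => t⁻¹) atTop (𝓝 0) := tendsto_inv_atTop_zero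
  have hsq : (fun t : ℝ => t⁻¹ ^ 2) =O[atTop] fun t => t⁻¹ := by
    simpa only [sq, mul_one] using
      (isBigO_refl (fun t : ℝ => t⁻¹) atTop).mul (hinv₀.isBigO_one ℝ)
  have hC : (fun t : ℝ => C₁ / t) =O[atTop] fun t => t⁻¹ :=
    IsBigO.of_bound ‖C₁‖ (Eventually.of_forall fun t => by simp [div_eq_mul_inv])
  have hf₁ : f =O[atTop] fun t => t⁻¹ := ((hf.trans hsq).add hC).congr_left fun t => by ring
  have hf₀ : Tendsto f atTop (𝓝 0) := hf₁.trans_tendsto hinv₀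
  have hg₁ : (fun t => -conj (f t)) =O[atTop] fun t => t⁻¹ :=
    IsBigO.of_norm_left (by simpa using hf₁.norm_left)
  have hg₀ : Tendsto (fun t => -conj (f t)) atTop (𝓝 0) := hg₁.trans_tendsto hinv₀
  have ha (p : ℂ) : (fun t : ℝ => lam * ((t : ℂ) - p)⁻¹) =O[atTop] fun t => t⁻¹ :=
    (isBigO_ofReal_sub_inv p).const_mul_left lam
  have hconj : (fun t : ℝ => conj (f t - C₁ / t)) =O[atTop] fun t => t⁻¹ ^ 2 :=
    IsBigO.of_norm_left (by simpa only [norm_conj] using hf.norm_left)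
  refine ((((isBigO_exp_mul_one_add_sub hg₁ (ha (conj μ)) hg₀).sub
    (isBigO_exp_mul_one_add_sub hf₁ (ha μ) hf₀)).add
    ((isBigO_ofReal_sub_inv_sub_ofReal_sub_inv (conj μ) μ).const_mul_left lam)).sub
    (hf.add hconj)).congr_left fun t => ?_
  rw [two_mul_re_div_ofReal]
  simp only [map_sub, div_eq_mul_inv]
  ring

theorem stmt14_general (C₁ : ℂ) (D T₀ : ℝ) (lam : ℝ) (μ : ℂ)
    (f : ℝ → ℂ)
    (hf : ∀ t : ℝ, T₀ ≤ t → ‖f t - C₁ / (t : ℂ)‖ ≤ D / t ^ 2) :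
    ∃ T₁ D' : ℝ, T₀ ≤ T₁ ∧ 0 < D' ∧ ∀ t : ℝ, T₁ ≤ t →
      ‖(Complex.exp (-(starRingEnd ℂ) (f t)) *
              (1 + (lam : ℂ) / ((t : ℂ) - (starRingEnd ℂ) μ))
            - Complex.exp (f t) * (1 + (lam : ℂ) / ((t : ℂ) - μ))
            + 2 * ((C₁.re : ℝ) : ℂ) / (t : ℂ))‖ ≤ D' / t ^ 2 := by
  have hf' : (fun t : ℝ => f t - C₁ / t) =O[atTop] fun t => t⁻¹ ^ 2 :=
    IsBigO.of_bound D <| (eventually_ge_atTop T₀).mono fun t ht => by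
      simpa [div_eq_mul_inv] using hf t ht
  obtain ⟨D', hD', hbound⟩ :=
    (isBigO_exp_conj_sub_exp_add_two_re_div (μ := μ) (lam := lam) hf').exists_pos
  obtain ⟨N, hN⟩ := eventually_atTop.1 hbound.bound
  refine ⟨max T₀ N, D', le_max_left _ _, hD', fun t ht => ?_⟩
  simpa [div_eq_mul_inv] using hN t (le_of_max_le_right ht)

/-- Expansion (7.9): if `|f(t) − C₁/t| ≤ D/t²` for `t ≥ T₀`, then there are `T₁ ≥ T₀` and
`D' > 0` such that for all `t ≥ T₁`,
`|e^{−conj(f(t))}(1 + λ/(t − conj(μ))) − e^{f(t)}(1 + λ/(t − μ)) + 2Re(C₁)/t| ≤ D'/t²`. -/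
theorem stmt14 (C₁ : ℂ) (D T₀ : ℝ) (hD : 0 < D) (hT₀ : 0 < T₀) (lam : ℝ) (μ : ℂ)
    (hμ : ‖μ‖ < T₀) (f : ℝ → ℂ)
    (hf : ∀ t : ℝ, T₀ ≤ t → ‖f t - C₁ / (t : ℂ)‖ ≤ D / t ^ 2) :
    ∃ T₁ D' : ℝ, T₀ ≤ T₁ ∧ 0 < D' ∧ ∀ t : ℝ, T₁ ≤ t →
      ‖(Complex.exp (-(starRingEnd ℂ) (f t)) *
              (1 + (lam : ℂ) / ((t : ℂ) - (starRingEnd ℂ) μ))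
            - Complex.exp (f t) * (1 + (lam : ℂ) / ((t : ℂ) - μ))
            + 2 * ((C₁.re : ℝ) : ℂ) / (t : ℂ))‖ ≤ D' / t ^ 2 :=
  stmt14_general C₁ D T₀ lam μ f hf
end

section
/- Let R' ≥ 1 and C > 0 be real numbers, and let f be a continuous complex-valued function on {z ∈ ℂ : |z| ≥ R'} with |f(z)| ≤ C/|z| there. For r > R', let Λ_r denote the polygonal path consisting of the three consecutive segments from −r to −r + i·r, from −r + i·r to r + i·r, and from r + i·r to r. Then the path integrals of z ↦ e^{iz + f(z)} over Λ_r along the sequence r = 2πn tend to 0 as n → ∞; explicitly, i·∫₀^{2πn} e^{i(−2πn+iv) + f(−2πn+iv)} dv + ∫_{−2πn}^{2πn} e^{i(u+i·2πn) + f(u+i·2πn)} du − i·∫₀^{2πn} e^{i(2πn+iv) + f(2πn+iv)} dv → 0 as n → ∞. -/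
/-!
With `r = 2πn` we have `e^{±ir} = 1`, so on the two vertical sides the integrand is
`e^{-v} e^{f(±r + iv)}`. Their contributions enter with opposite signs and, since
`|f| ≤ C/r` there, differ by at most `4C/r` (using `|e^w - 1| ≤ 2|w|` and `∫₀^∞ e^{-v} dv = 1`).
On the top side `|e^{iz + f(z)}| = e^{-r + Re f(z)} ≤ e^{C/r - r}`, so it contributes at
most `2r e^{C/r - r}`.
-/

open Complex Filter Topology intervalIntegral

/-- The path integral of `g` along `Λ_r`. -/
noncomputable def polygonIntegral (g : ℂ → ℂ) (r : ℝ) : ℂ :=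
  I * (∫ v in (0 : ℝ)..r, g (-(r : ℂ) + I * v)) + (∫ u in -r..r, g (u + I * r))
    - I * ∫ v in (0 : ℝ)..r, g ((r : ℂ) + I * v)

lemma exp_I_mul_add_I_mul {x : ℂ} (hx : exp (I * x) = 1) (v : ℝ) (w : ℂ) :
    exp (I * (x + I * v) + w) = exp (-(v : ℂ)) * exp w := by
  rw [show I * (x + I * v) + w = I * x + (-(v : ℂ) + w) by linear_combination (v : ℂ) * I_sq,
    exp_add, hx, one_mul, exp_add]

lemma norm_exp_sub_exp_le {a b : ℂ} (ha : ‖a‖ ≤ 1) (hb : ‖b‖ ≤ 1) :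
    ‖exp a - exp b‖ ≤ 2 * ‖a‖ + 2 * ‖b‖ :=
  calc ‖exp a - exp b‖ = ‖(exp a - 1) - (exp b - 1)‖ := by rw [sub_sub_sub_cancel_right]
    _ ≤ ‖exp a - 1‖ + ‖exp b - 1‖ := norm_sub_le _ _
    _ ≤ 2 * ‖a‖ + 2 * ‖b‖ := add_le_add (norm_exp_sub_one_le ha) (norm_exp_sub_one_le hb)

lemma norm_integral_exp_neg_mul_le {h : ℝ → ℂ} {b M : ℝ} (hb : 0 ≤ b) (hM : 0 ≤ M)
    (hh : ∀ v, ‖h v‖ ≤ M) : ‖∫ v in (0 : ℝ)..b, exp (-(v : ℂ)) * h v‖ ≤ M := by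
  have hbound : ∀ v : ℝ, ‖exp (-(v : ℂ)) * h v‖ ≤ Real.exp (-v) * M := fun v => by
    rw [norm_mul, norm_exp, neg_re, ofReal_re]
    exact mul_le_mul_of_nonneg_left (hh v) (Real.exp_nonneg _)
  calc ‖∫ v in (0 : ℝ)..b, exp (-(v : ℂ)) * h v‖
      ≤ ∫ v in (0 : ℝ)..b, Real.exp (-v) * M :=
        norm_integral_le_of_norm_le hb (.of_forall fun v _ => hbound v)
          ((by fun_prop : Continuous fun v : ℝ => Real.exp (-v) * M).intervalIntegrable _ _)
    _ = (1 - Real.exp (-b)) * M := by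
        rw [integral_mul_const, integral_comp_neg (fun v => Real.exp v), integral_exp, neg_zero,
          Real.exp_zero]
    _ ≤ M := mul_le_of_le_one_left hM (by linarith [Real.exp_nonneg (-b)])

section Sides

variable {f : ℂ → ℂ} {ρ ε : ℝ}

lemma le_norm_add_I_mul {x : ℂ} (hx : ρ ≤ |x.re|) (v : ℝ) : ρ ≤ ‖x + I * v‖ :=
  calc ρ ≤ |(x + I * v).re| := by simpa using hx
    _ ≤ ‖x + I * v‖ := abs_re_le_norm _

lemma le_norm_ofReal_add_I_mul {y : ℝ} (hy : ρ ≤ |y|) (u : ℝ) : ρ ≤ ‖(u : ℂ) + I * y‖ :=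
  calc ρ ≤ |((u : ℂ) + I * y).im| := by simpa using hy
    _ ≤ ‖(u : ℂ) + I * y‖ := abs_im_le_norm _

lemma intervalIntegrable_exp_vertical (hcont : ContinuousOn f {z | ρ ≤ ‖z‖}) {x : ℂ}
    (hx : ρ ≤ |x.re|) (a b : ℝ) :
    IntervalIntegrable (fun v : ℝ => exp (I * (x + I * v) + f (x + I * v))) MeasureTheory.volume
      a b := by
  have hpath : Continuous fun v : ℝ => x + I * v := by fun_prop
  exact (continuous_exp.comp ((continuous_const.mul hpath).add
    (hcont.comp_continuous hpath (le_norm_add_I_mul hx)))).intervalIntegrable a b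

lemma norm_integral_vertical_sub_le (hcont : ContinuousOn f {z | ρ ≤ ‖z‖})
    (hf : ∀ z, ρ ≤ ‖z‖ → ‖f z‖ ≤ ε) (hε : ε ≤ 1) {x y : ℂ} (hx : exp (I * x) = 1)
    (hy : exp (I * y) = 1) (hxρ : ρ ≤ |x.re|) (hyρ : ρ ≤ |y.re|) {b : ℝ} (hb : 0 ≤ b) :
    ‖(∫ v in (0 : ℝ)..b, exp (I * (x + I * v) + f (x + I * v)))
      - ∫ v in (0 : ℝ)..b, exp (I * (y + I * v) + f (y + I * v))‖ ≤ 4 * ε := by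
  have hfx v := hf _ (le_norm_add_I_mul hxρ v)
  have hfy v := hf _ (le_norm_add_I_mul hyρ v)
  rw [← integral_sub (intervalIntegrable_exp_vertical hcont hxρ _ _)
    (intervalIntegrable_exp_vertical hcont hyρ _ _)]
  simp only [exp_I_mul_add_I_mul hx, exp_I_mul_add_I_mul hy, ← mul_sub]
  refine norm_integral_exp_neg_mul_le hb (by linarith [(norm_nonneg _).trans (hfx 0)]) fun v => ?_
  calc _ ≤ 2 * ‖f (x + I * v)‖ + 2 * ‖f (y + I * v)‖ :=
        norm_exp_sub_exp_le ((hfx v).trans hε) ((hfy v).trans hε)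
    _ ≤ 4 * ε := by linarith [hfx v, hfy v]

lemma norm_integral_horizontal_le (hf : ∀ z, ρ ≤ ‖z‖ → ‖f z‖ ≤ ε) {y : ℝ} (hyρ : ρ ≤ |y|)
    (a b : ℝ) :
    ‖∫ u in a..b, exp (I * (u + I * y) + f (u + I * y))‖ ≤ Real.exp (ε - y) * |b - a| := by
  refine norm_integral_le_of_norm_le_const fun u _ => ?_
  rw [norm_exp, add_re, Real.exp_le_exp]
  have hre : (I * ((u : ℂ) + I * y)).re = -y := by simp
  linarith [(re_le_norm _).trans (hf _ (le_norm_ofReal_add_I_mul hyρ u))]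

end Sides

lemma norm_polygonIntegral_le {f : ℂ → ℂ} {r ε : ℝ} (hr : 0 ≤ r) (hexp : exp (I * r) = 1)
    (hcont : ContinuousOn f {z | r ≤ ‖z‖}) (hf : ∀ z, r ≤ ‖z‖ → ‖f z‖ ≤ ε) (hε : ε ≤ 1) :
    ‖polygonIntegral (fun z => exp (I * z + f z)) r‖ ≤ 4 * ε + Real.exp (ε - r) * (2 * r) := by
  have hexp' : exp (I * -(r : ℂ)) = 1 := by rw [mul_neg, exp_neg, hexp, inv_one]
  have hvert := norm_integral_vertical_sub_le hcont hf hε hexp' hexp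
    (by simp [abs_of_nonneg hr]) (by simp [abs_of_nonneg hr]) hr
  have htop := norm_integral_horizontal_le hf (abs_of_nonneg hr).ge (-r) r
  rw [sub_neg_eq_add, abs_of_nonneg (by linarith), ← two_mul] at htop
  unfold polygonIntegral
  rw [show ∀ a b c : ℂ, I * a + b - I * c = I * (a - c) + b by intros; ring]
  calc _ ≤ ‖I * _‖ + ‖_‖ := norm_add_le _ _
    _ ≤ 4 * ε + Real.exp (ε - r) * (2 * r) := by
        rw [norm_mul, norm_I, one_mul]
        exact add_le_add hvert htop

lemma tendsto_polygon_bound (C : ℝ) :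
    Tendsto (fun r => 4 * (C / r) + Real.exp (C / r - r) * (2 * r)) atTop (𝓝 0) := by
  have hCr : Tendsto (fun r : ℝ => C / r) atTop (𝓝 0) := tendsto_const_nhds.div_atTop tendsto_id
  have htop : Tendsto (fun r => Real.exp (C / r) * (2 * (r ^ 1 * Real.exp (-r)))) atTop (𝓝 0) := by
    simpa using ((Real.continuous_exp.tendsto 0).comp hCr).mul
      ((Real.tendsto_pow_mul_exp_neg_atTop_nhds_zero 1).const_mul 2)
  simpa using (hCr.const_mul 4).add (htop.congr fun r => by
    rw [sub_eq_add_neg, Real.exp_add]; ring)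

theorem stmt15_general (R' C : ℝ) (hC : 0 < C) (f : ℂ → ℂ)
    (hcont : ContinuousOn f {z : ℂ | R' ≤ ‖z‖})
    (hf : ∀ z : ℂ, R' ≤ ‖z‖ → ‖f z‖ ≤ C / ‖z‖) :
    Filter.Tendsto (fun n : ℕ =>
      Complex.I * (∫ v in (0 : ℝ)..(2 * Real.pi * n),
          Complex.exp (Complex.I * (-((2 * Real.pi * n : ℝ) : ℂ) + Complex.I * (v : ℂ))
            + f (-((2 * Real.pi * n : ℝ) : ℂ) + Complex.I * (v : ℂ))))
      + (∫ u in (-(2 * Real.pi * n) : ℝ)..(2 * Real.pi * n),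
          Complex.exp (Complex.I * ((u : ℂ) + Complex.I * ((2 * Real.pi * n : ℝ) : ℂ))
            + f ((u : ℂ) + Complex.I * ((2 * Real.pi * n : ℝ) : ℂ))))
      - Complex.I * (∫ v in (0 : ℝ)..(2 * Real.pi * n),
          Complex.exp (Complex.I * (((2 * Real.pi * n : ℝ) : ℂ) + Complex.I * (v : ℂ))
            + f (((2 * Real.pi * n : ℝ) : ℂ) + Complex.I * (v : ℂ)))))
      Filter.atTop (nhds 0) := by
  have hr : Tendsto (fun n : ℕ => 2 * Real.pi * n) atTop atTop :=
    tendsto_natCast_atTop_atTop.const_mul_atTop (by positivity)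
  refine squeeze_zero_norm' ?_ ((tendsto_polygon_bound C).comp hr)
  filter_upwards [hr.eventually_ge_atTop (max R' (max C 1))] with n hn
  set r := 2 * Real.pi * n
  obtain ⟨hR'r, hCr, h1r⟩ : R' ≤ r ∧ C ≤ r ∧ 1 ≤ r := by simpa only [max_le_iff] using hn
  have hr0 : 0 < r := by linarith
  have hexp : exp (I * r) = 1 := by
    simpa [r, mul_comm, mul_left_comm] using exp_nat_mul_two_pi_mul_I n
  exact norm_polygonIntegral_le hr0.le hexp (hcont.mono fun z hz => hR'r.trans hz)
    (fun z hz => (hf z (hR'r.trans hz)).trans (div_le_div_of_nonneg_left hC.le hr0 hz))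
    ((div_le_one hr0).2 hCr)

/-- Let `f` be continuous on `{|z| ≥ R'}` (`R' ≥ 1`) with `|f(z)| ≤ C/|z|` there. Then the
path integrals of `z ↦ e^{iz + f(z)}` over the polygonal paths `Λ_r` (from `−r` up to
`−r + ir`, across to `r + ir`, and down to `r`) along the sequence `r = 2πn` tend to `0`
as `n → ∞`. -/
theorem stmt15 (R' C : ℝ) (hR' : 1 ≤ R') (hC : 0 < C) (f : ℂ → ℂ)
    (hcont : ContinuousOn f {z : ℂ | R' ≤ ‖z‖})
    (hf : ∀ z : ℂ, R' ≤ ‖z‖ → ‖f z‖ ≤ C / ‖z‖) :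
    Filter.Tendsto (fun n : ℕ =>
      Complex.I * (∫ v in (0 : ℝ)..(2 * Real.pi * n),
          Complex.exp (Complex.I * (-((2 * Real.pi * n : ℝ) : ℂ) + Complex.I * (v : ℂ))
            + f (-((2 * Real.pi * n : ℝ) : ℂ) + Complex.I * (v : ℂ))))
      + (∫ u in (-(2 * Real.pi * n) : ℝ)..(2 * Real.pi * n),
          Complex.exp (Complex.I * ((u : ℂ) + Complex.I * ((2 * Real.pi * n : ℝ) : ℂ))
            + f ((u : ℂ) + Complex.I * ((2 * Real.pi * n : ℝ) : ℂ))))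
      - Complex.I * (∫ v in (0 : ℝ)..(2 * Real.pi * n),
          Complex.exp (Complex.I * (((2 * Real.pi * n : ℝ) : ℂ) + Complex.I * (v : ℂ))
            + f (((2 * Real.pi * n : ℝ) : ℂ) + Complex.I * (v : ℂ)))))
      Filter.atTop (nhds 0) :=
  stmt15_general R' C hC f hcont hf
end
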